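/- arXiv:2006.00189 — 10 statements merged into one kernel-verified Lean document; each statement's English description precedes it below -/
import Mathlib

section
/- Let A be an m×n complex matrix and B an m×k complex matrix. Then rank(A) + rank((I - A A⁺) B) = rank(B) + rank((I - B B⁺) A) = rank of the block matrix [A B], where A⁺ denotes the Moore–Penrose inverse. -/
open Matrix

/-- `Ap` is the Moore–Penrose inverse of `A`. -/
def IsMoorePenrose {m n : ℕ} (A : Matrix (Fin m) (Fin n) ℂ)
    (Ap : Matrix (Fin n) (Fin m) ℂ) : Prop :=
  A * Ap * A = A ∧ Ap * A * Ap = Ap ∧ (A * Ap)ᴴ = A * Ap ∧ (Ap * A)ᴴ = Ap * A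

/-!
Since `A * Ap * A = A`, the matrix `P = A * Ap` is idempotent with the same column space as `A`.
The column space of `[A B]` is the sum of the column spaces of `A` and of
`(1 - P) * B = B - A * (Ap * B)`, and this sum is direct because `P` fixes the first and kills the
second. Hence `rank A + rank ((1 - P) * B) = rank [A B]`, and likewise with `A` and `B` exchanged.
-/

namespace Matrix

open LinearMap (range)
open Submodule (mem_sup_left mem_sup_right)

section CommRing

variable {R : Type*} [CommRing R] {m n p : Type*} [Fintype n] [Fintype p]

theorem range_mulVecLin_fromCols (A : Matrix m n R) (B : Matrix m p R) :
    range (fromCols A B).mulVecLin = range A.mulVecLin ⊔ range B.mulVecLin := by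
  have hcol : (fromCols A B).col = Sum.elim A.col B.col := by
    funext j; cases j <;> rfl
  rw [range_mulVecLin, range_mulVecLin, range_mulVecLin, hcol, Set.Sum.elim_range,
    Submodule.span_union]

theorem sup_range_mulVecLin_add_mul_le (A : Matrix m n R) (B : Matrix m p R)
    (M : Matrix n p R) :
    range A.mulVecLin ⊔ range (B + A * M).mulVecLin ≤
      range A.mulVecLin ⊔ range B.mulVecLin := by
  refine sup_le le_sup_left ?_
  rintro _ ⟨x, rfl⟩
  rw [mulVecLin_apply, add_mulVec, ← mulVec_mulVec]
  exact add_mem (mem_sup_right ⟨x, rfl⟩) (mem_sup_left ⟨M *ᵥ x, rfl⟩)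

theorem sup_range_mulVecLin_add_mul (A : Matrix m n R) (B : Matrix m p R) (M : Matrix n p R) :
    range A.mulVecLin ⊔ range (B + A * M).mulVecLin = range A.mulVecLin ⊔ range B.mulVecLin :=
  le_antisymm (sup_range_mulVecLin_add_mul_le A B M) <| by
    simpa [Matrix.mul_neg, add_neg_cancel_right] using
      sup_range_mulVecLin_add_mul_le A (B + A * M) (-M)

variable [Fintype m] [DecidableEq m]

theorem disjoint_range_mulVecLin_one_sub_mul_mul {A : Matrix m n R} {G : Matrix n m R}
    (hG : A * G * A = A) (B : Matrix m p R) :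
    Disjoint (range A.mulVecLin) (range ((1 - A * G) * B).mulVecLin) := by
  have hfix : ∀ x, (A * G) *ᵥ (A *ᵥ x) = A *ᵥ x := fun x => by rw [mulVec_mulVec, hG]
  have hkill : A * G * ((1 - A * G) * B) = 0 := by
    rw [← Matrix.mul_assoc, Matrix.mul_sub, Matrix.mul_one, ← Matrix.mul_assoc, hG, sub_self,
      Matrix.zero_mul]
  rw [Submodule.disjoint_def]
  rintro _ ⟨x, rfl⟩ ⟨y, hy⟩
  simp only [mulVecLin_apply] at hy ⊢
  rw [← hfix, ← hy, mulVec_mulVec, hkill, zero_mulVec]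

end CommRing

variable {K : Type*} [Field K] {m n p : Type*} [Fintype n] [Fintype p]

theorem rank_fromCols_comm (A : Matrix m n K) (B : Matrix m p K) :
    (fromCols B A).rank = (fromCols A B).rank := by
  rw [rank, rank, range_mulVecLin_fromCols, range_mulVecLin_fromCols, sup_comm]

theorem rank_add_rank_one_sub_mul_mul_eq_rank_fromCols [Fintype m] [DecidableEq m]
    {A : Matrix m n K} {G : Matrix n m K} (hG : A * G * A = A) (B : Matrix m p K) :
    A.rank + ((1 - A * G) * B).rank = (fromCols A B).rank := by
  have hproj : (1 - A * G) * B = B + A * -(G * B) := by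
    rw [Matrix.sub_mul, Matrix.one_mul, Matrix.mul_neg, Matrix.mul_assoc, sub_eq_add_neg]
  rw [rank, rank, rank, ← Submodule.finrank_sup_add_finrank_inf_eq,
    (disjoint_range_mulVecLin_one_sub_mul_mul hG B).eq_bot, finrank_bot, add_zero,
    range_mulVecLin_fromCols, hproj, sup_range_mulVecLin_add_mul]

end Matrix

theorem rank_add_rank_proj_col {m n k : ℕ}
    (A : Matrix (Fin m) (Fin n) ℂ) (B : Matrix (Fin m) (Fin k) ℂ)
    (Ap : Matrix (Fin n) (Fin m) ℂ) (Bp : Matrix (Fin k) (Fin m) ℂ)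
    (hA : IsMoorePenrose A Ap) (hB : IsMoorePenrose B Bp) :
    A.rank + ((1 - A * Ap) * B).rank = B.rank + ((1 - B * Bp) * A).rank ∧
    B.rank + ((1 - B * Bp) * A).rank = (Matrix.fromCols A B).rank := by
  have hAB := rank_add_rank_one_sub_mul_mul_eq_rank_fromCols hA.1 B
  have hBA := rank_add_rank_one_sub_mul_mul_eq_rank_fromCols hB.1 A
  rw [rank_fromCols_comm] at hBA
  exact ⟨hAB.trans hBA.symm, hBA⟩
end

section
/- Let A be an m×n complex matrix and C an l×n complex matrix. Then rank(A) + rank(C (I - A⁺ A)) = rank(C) + rank(A (I - C⁺ C)) = rank of the block matrix formed by stacking A above C. -/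
open Matrix

/-!
Since `A A⁺ A = A`, the map `P = 1 - A⁺ A` has range exactly `ker A`. Hence
`rank (C P) = dim C(ker A) = dim ker A - dim (ker A ∩ ker C)`, while rank-nullity gives
`rank A = n - dim ker A` and `rank [A; C] = n - dim (ker A ∩ ker C)`, since
`ker [A; C] = ker A ∩ ker C`. Adding up, `rank A + rank (C P) = rank [A; C]`, and exchanging
the roles of `A` and `C` gives the other identity.
-/

open Module LinearMap

theorem Submodule.finrank_map_add_finrank_inf_ker {K V W : Type*} [DivisionRing K]
    [AddCommGroup V] [Module K V] [AddCommGroup W] [Module K W] [FiniteDimensional K V]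
    (f : V →ₗ[K] W) (p : Submodule K V) :
    finrank K (p.map f) + finrank K ↥(p ⊓ ker f) = finrank K p := by
  have hker : (ker f).comap p.subtype = (p ⊓ ker f).comap p.subtype := by
    rw [Submodule.comap_inf, Submodule.comap_subtype_self, top_inf_eq]
  have hfinrank : finrank K ↥((ker f).comap p.subtype) = finrank K ↥(p ⊓ ker f) := by
    rw [hker]
    exact (Submodule.comapSubtypeEquivOfLe inf_le_left).finrank_eq
  rw [← hfinrank, ← range_domRestrict, ← ker_domRestrict]
  exact (f.domRestrict p).finrank_range_add_finrank_ker

namespace Matrix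

variable {R K m n l : Type*} [Fintype n]

theorem ker_mulVecLin_fromRows [CommSemiring R] (A : Matrix m n R) (C : Matrix l n R) :
    ker (fromRows A C).mulVecLin = ker A.mulVecLin ⊓ ker C.mulVecLin := by
  ext x
  simp only [mem_ker, Submodule.mem_inf, mulVecLin_apply, fromRows_mulVec, funext_iff,
    Sum.forall, Sum.elim_inl, Sum.elim_inr, Pi.zero_apply]

theorem range_mulVecLin_one_sub_mul_eq_ker [CommRing R] [Fintype m] [DecidableEq n]
    {A : Matrix m n R} {G : Matrix n m R} (hG : A * G * A = A) :
    range (1 - G * A).mulVecLin = ker A.mulVecLin := by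
  apply le_antisymm
  · rintro _ ⟨x, rfl⟩
    rw [mem_ker, mulVecLin_apply, mulVecLin_apply, mulVec_mulVec, Matrix.mul_sub,
      Matrix.mul_one, ← Matrix.mul_assoc, hG, sub_self, zero_mulVec]
  · intro x hx
    rw [mem_ker, mulVecLin_apply] at hx
    exact ⟨x, by rw [mulVecLin_apply, sub_mulVec, one_mulVec, ← mulVec_mulVec, hx, mulVec_zero,
      sub_zero]⟩

theorem rank_add_finrank_ker_mulVecLin [Field K] (A : Matrix m n K) :
    A.rank + finrank K (ker A.mulVecLin) = Fintype.card n := by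
  rw [rank, A.mulVecLin.finrank_range_add_finrank_ker, finrank_fintype_fun_eq_card]

theorem rank_mul_one_sub_mul_add_finrank_ker_inf [Field K] [Fintype m] [DecidableEq n]
    {A : Matrix m n K} {G : Matrix n m K} (hG : A * G * A = A) (C : Matrix l n K) :
    (C * (1 - G * A)).rank + finrank K ↥(ker A.mulVecLin ⊓ ker C.mulVecLin)
      = finrank K (ker A.mulVecLin) := by
  rw [rank, mulVecLin_mul, range_comp, range_mulVecLin_one_sub_mul_eq_ker hG]
  exact Submodule.finrank_map_add_finrank_inf_ker _ _

theorem rank_add_rank_mul_one_sub_mul [Field K] [Fintype m] [DecidableEq n]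
    {A : Matrix m n K} {G : Matrix n m K} (hG : A * G * A = A) (C : Matrix l n K) :
    A.rank + (C * (1 - G * A)).rank = (fromRows A C).rank := by
  have hA := A.rank_add_finrank_ker_mulVecLin
  have hAC := (fromRows A C).rank_add_finrank_ker_mulVecLin
  have hCP := rank_mul_one_sub_mul_add_finrank_ker_inf hG C
  rw [ker_mulVecLin_fromRows] at hAC
  omega

theorem rank_fromRows_comm [CommRing R] (A : Matrix m n R) (C : Matrix l n R) :
    (fromRows C A).rank = (fromRows A C).rank := by
  rw [← rank_submatrix (fromRows A C) (Equiv.sumComm l m) (Equiv.refl n)]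
  congr 1
  ext (i | i) j <;> rfl

end Matrix

theorem rank_add_rank_proj_row {m n l : ℕ}
    (A : Matrix (Fin m) (Fin n) ℂ) (C : Matrix (Fin l) (Fin n) ℂ)
    (Ap : Matrix (Fin n) (Fin m) ℂ) (Cp : Matrix (Fin n) (Fin l) ℂ)
    (hA : IsMoorePenrose A Ap) (hC : IsMoorePenrose C Cp) :
    A.rank + (C * (1 - Ap * A)).rank = C.rank + (A * (1 - Cp * C)).rank ∧
    C.rank + (A * (1 - Cp * C)).rank = (Matrix.fromRows A C).rank := by
  have hAC := rank_add_rank_mul_one_sub_mul hA.1 C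
  have hCA := rank_add_rank_mul_one_sub_mul hC.1 A
  rw [rank_fromRows_comm] at hCA
  exact ⟨hAC.trans hCA.symm, hCA⟩
end

section
/- Let A be an m×n complex matrix, D a p×q complex matrix, and E an m×q complex matrix. The matrix equation A X + Y D = E has a solution (X, Y) with X an n×q matrix and Y an m×p matrix if and only if (I - A A⁺) E (I - D⁺ D) = 0. -/
open Matrix

theorem one_sided_sylvester_solvable_iff {m n p q : ℕ}
    (A : Matrix (Fin m) (Fin n) ℂ) (D : Matrix (Fin p) (Fin q) ℂ)
    (E : Matrix (Fin m) (Fin q) ℂ)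
    (Ap : Matrix (Fin n) (Fin m) ℂ) (Dp : Matrix (Fin q) (Fin p) ℂ)
    (hA : IsMoorePenrose A Ap) (hD : IsMoorePenrose D Dp) :
    (∃ (X : Matrix (Fin n) (Fin q) ℂ) (Y : Matrix (Fin m) (Fin p) ℂ),
      A * X + Y * D = E) ↔ (1 - A * Ap) * E * (1 - Dp * D) = 0 := by
  obtain ⟨hA1, -, -, -⟩ := hA
  obtain ⟨hD1, -, -, -⟩ := hD
  constructor
  · rintro ⟨X, Y, rfl⟩
    have h1 : (1 - A * Ap) * (A * X) = 0 := by
      rw [Matrix.sub_mul, Matrix.one_mul, ← Matrix.mul_assoc, hA1, sub_self]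
    have h2 : (Y * D) * (1 - Dp * D) = 0 := by
      rw [Matrix.mul_sub, Matrix.mul_one, Matrix.mul_assoc Y, ← Matrix.mul_assoc D,
        hD1, sub_self]
    rw [Matrix.mul_add, h1, zero_add, Matrix.mul_assoc, h2, Matrix.mul_zero]
  · intro h
    refine ⟨Ap * E, (1 - A * Ap) * E * Dp, ?_⟩
    have hY : (1 - A * Ap) * E * Dp * D = (1 - A * Ap) * E := by
      have h' := h
      rw [Matrix.mul_sub, Matrix.mul_one, sub_eq_zero] at h'
      rw [Matrix.mul_assoc, ← h']
    rw [hY, Matrix.sub_mul, Matrix.one_mul, ← Matrix.mul_assoc]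
    abel
end

section
/- Let A₁ ∈ ℂ^{m×p}, B₁ ∈ ℂ^{q×n}, C₁ ∈ ℂ^{m×r}, D₁ ∈ ℂ^{s×n}, E₁ ∈ ℂ^{m×n}. Set M₁ = (I - A₁A₁⁺)C₁, N₁ = D₁(I - B₁⁺B₁). Then the equation A₁X₁B₁ + C₁X₂D₁ = E₁ has a solution (X₁, X₂) if and only if all four conditions hold: (I - M₁M₁⁺)(I - A₁A₁⁺)E₁ = 0, E₁(I - B₁⁺B₁)(I - N₁⁺N₁) = 0, (I - A₁A₁⁺)E₁(I - D₁⁺D₁) = 0, and (I - C₁C₁⁺)E₁(I - B₁⁺B₁) = 0. -/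
open Matrix

section Helpers
set_option linter.unusedSectionVars false
variable {I J K L O : Type*} [Fintype I] [Fintype J] [Fintype K] [Fintype L]

lemma mp_m2 {a : Matrix I J ℂ} {b : Matrix J K ℂ} {c : Matrix I K ℂ} (h : a * b = c)
    (X : Matrix K O ℂ) : a * (b * X) = c * X := by rw [← Matrix.mul_assoc, h]

lemma mp_m3 {a : Matrix I J ℂ} {b : Matrix J K ℂ} {c : Matrix K L ℂ} {d : Matrix I L ℂ}
    (h : a * b * c = d) (X : Matrix L O ℂ) : a * (b * (c * X)) = d * X := by
  rw [← Matrix.mul_assoc, ← Matrix.mul_assoc, h]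

lemma mp_r3 {a : Matrix I J ℂ} {b : Matrix J K ℂ} {c : Matrix K L ℂ} {d : Matrix I L ℂ}
    (h : a * b * c = d) : a * (b * c) = d := by rw [← Matrix.mul_assoc]; exact h
end Helpers

theorem two_sided_sylvester_solvable_iff {m n p q r s : ℕ}
    (A₁ : Matrix (Fin m) (Fin p) ℂ) (B₁ : Matrix (Fin q) (Fin n) ℂ)
    (C₁ : Matrix (Fin m) (Fin r) ℂ) (D₁ : Matrix (Fin s) (Fin n) ℂ)
    (E₁ : Matrix (Fin m) (Fin n) ℂ)
    (A₁p : Matrix (Fin p) (Fin m) ℂ) (B₁p : Matrix (Fin n) (Fin q) ℂ)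
    (C₁p : Matrix (Fin r) (Fin m) ℂ) (D₁p : Matrix (Fin n) (Fin s) ℂ)
    (hA : IsMoorePenrose A₁ A₁p) (hB : IsMoorePenrose B₁ B₁p)
    (hC : IsMoorePenrose C₁ C₁p) (hD : IsMoorePenrose D₁ D₁p)
    (M₁ : Matrix (Fin m) (Fin r) ℂ) (hM₁ : M₁ = (1 - A₁ * A₁p) * C₁)
    (N₁ : Matrix (Fin s) (Fin n) ℂ) (hN₁ : N₁ = D₁ * (1 - B₁p * B₁))
    (M₁p : Matrix (Fin r) (Fin m) ℂ) (N₁p : Matrix (Fin n) (Fin s) ℂ)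
    (hM : IsMoorePenrose M₁ M₁p) (hN : IsMoorePenrose N₁ N₁p) :
    (∃ (X₁ : Matrix (Fin p) (Fin q) ℂ) (X₂ : Matrix (Fin r) (Fin s) ℂ),
      A₁ * X₁ * B₁ + C₁ * X₂ * D₁ = E₁) ↔
    ((1 - M₁ * M₁p) * ((1 - A₁ * A₁p) * E₁) = 0 ∧
     E₁ * (1 - B₁p * B₁) * (1 - N₁p * N₁) = 0 ∧
     (1 - A₁ * A₁p) * E₁ * (1 - D₁p * D₁) = 0 ∧
     (1 - C₁ * C₁p) * E₁ * (1 - B₁p * B₁) = 0) := by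
  obtain ⟨hA1, hA2, hA3, hA4⟩ := hA
  obtain ⟨hB1, hB2, hB3, hB4⟩ := hB
  obtain ⟨hC1, hC2, hC3, hC4⟩ := hC
  obtain ⟨hD1, hD2, hD3, hD4⟩ := hD
  obtain ⟨hM1, hM2, hM3, hM4⟩ := hM
  obtain ⟨hN1, hN2, hN3, hN4⟩ := hN
  constructor
  · rintro ⟨X, Y, hXY⟩
    have t1 : (1 - A₁ * A₁p) * (A₁ * X * B₁) = 0 := by
      simp only [Matrix.sub_mul, Matrix.one_mul, Matrix.mul_assoc, mp_m3 hA1, sub_self]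
    have t2 : (1 - A₁ * A₁p) * (C₁ * Y * D₁) = M₁ * (Y * D₁) := by
      rw [hM₁]; simp only [Matrix.mul_assoc]
    have hra : (1 - A₁ * A₁p) * E₁ = M₁ * (Y * D₁) := by
      rw [← hXY, Matrix.mul_add, t1, t2, zero_add]
    have t4 : (A₁ * X * B₁) * (1 - B₁p * B₁) = 0 := by
      simp only [Matrix.mul_sub, Matrix.mul_one, Matrix.mul_assoc, mp_r3 hB1, sub_self]
    have t5 : (C₁ * Y * D₁) * (1 - B₁p * B₁) = (C₁ * Y) * N₁ := by
      rw [hN₁]; simp only [Matrix.mul_assoc]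
    have hlb : E₁ * (1 - B₁p * B₁) = (C₁ * Y) * N₁ := by
      rw [← hXY, Matrix.add_mul, t4, t5, zero_add]
    refine ⟨?_, ?_, ?_, ?_⟩
    · rw [hra]
      simp only [Matrix.sub_mul, Matrix.one_mul, Matrix.mul_assoc, mp_m3 hM1, sub_self]
    · rw [hlb]
      simp only [Matrix.mul_sub, Matrix.mul_one, Matrix.mul_assoc, mp_r3 hN1, sub_self]
    · rw [hra]
      simp only [Matrix.mul_sub, Matrix.mul_one, Matrix.mul_assoc, mp_r3 hD1, sub_self]
    · rw [Matrix.mul_assoc, hlb]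
      simp only [Matrix.sub_mul, Matrix.one_mul, Matrix.mul_assoc, mp_m3 hC1, sub_self]
  · rintro ⟨c1, c2, c3, c4⟩
    -- basic annihilation facts
    have d1 : A₁ * A₁p * M₁ = 0 := by
      rw [hM₁]
      simp only [Matrix.mul_sub, Matrix.sub_mul, Matrix.one_mul, Matrix.mul_one,
        Matrix.mul_assoc, mp_m3 hA1, sub_self]
    have d2 : N₁ * B₁p = 0 := by
      rw [hN₁]
      simp only [Matrix.sub_mul, Matrix.mul_sub, Matrix.one_mul, Matrix.mul_one,
        Matrix.mul_assoc, mp_r3 hB2, sub_self, Matrix.mul_zero]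
    have daux : A₁ * A₁p * (M₁ * M₁p) = 0 := by
      rw [← Matrix.mul_assoc, d1, Matrix.zero_mul]
    have d5 : M₁ * M₁p * (A₁ * A₁p) = 0 := by
      calc M₁ * M₁p * (A₁ * A₁p) = (A₁ * A₁p * (M₁ * M₁p))ᴴ := by
            rw [conjTranspose_mul, hM3, hA3]
        _ = (0 : Matrix (Fin m) (Fin m) ℂ)ᴴ := by rw [daux]
        _ = 0 := conjTranspose_zero
    have d5' : ∀ {o : ℕ} (X : Matrix (Fin m) (Fin o) ℂ),
        M₁ * (M₁p * (A₁ * (A₁p * X))) = 0 := by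
      intro o X
      calc M₁ * (M₁p * (A₁ * (A₁p * X))) = (M₁ * M₁p * (A₁ * A₁p)) * X := by
            simp only [Matrix.mul_assoc]
        _ = 0 := by rw [d5, Matrix.zero_mul]
    have d6 : M₁p * (A₁ * A₁p) = 0 := by
      calc M₁p * (A₁ * A₁p) = M₁p * M₁ * M₁p * (A₁ * A₁p) := by rw [hM2]
        _ = M₁p * (M₁ * M₁p * (A₁ * A₁p)) := by simp only [Matrix.mul_assoc]
        _ = 0 := by rw [d5, Matrix.mul_zero]
    have d6' : ∀ {o : ℕ} (X : Matrix (Fin m) (Fin o) ℂ),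
        M₁p * (A₁ * (A₁p * X)) = 0 := by
      intro o X
      calc M₁p * (A₁ * (A₁p * X)) = (M₁p * (A₁ * A₁p)) * X := by
            simp only [Matrix.mul_assoc]
        _ = 0 := by rw [d6, Matrix.zero_mul]
    have d2' : N₁p * N₁ * (B₁p * B₁) = 0 := by
      rw [Matrix.mul_assoc, ← Matrix.mul_assoc N₁, d2, Matrix.zero_mul, Matrix.mul_zero]
    have dH : (B₁p * B₁) * (N₁p * N₁) = 0 := by
      calc (B₁p * B₁) * (N₁p * N₁) = (N₁p * N₁ * (B₁p * B₁))ᴴ := by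
            rw [conjTranspose_mul, hB4, hN4]
        _ = (0 : Matrix (Fin n) (Fin n) ℂ)ᴴ := by rw [d2']
        _ = 0 := conjTranspose_zero
    have d7 : B₁p * B₁ * N₁p = 0 := by
      calc B₁p * B₁ * N₁p = B₁p * B₁ * (N₁p * N₁ * N₁p) := by rw [hN2]
        _ = (B₁p * B₁) * (N₁p * N₁) * N₁p := by simp only [Matrix.mul_assoc]
        _ = 0 := by rw [dH, Matrix.zero_mul]
    have d7' : ∀ {o : ℕ} (X : Matrix (Fin s) (Fin o) ℂ),
        B₁p * (B₁ * (N₁p * X)) = 0 := by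
      intro o X
      calc B₁p * (B₁ * (N₁p * X)) = (B₁p * B₁ * N₁p) * X := by
            simp only [Matrix.mul_assoc]
        _ = 0 := by rw [d7, Matrix.zero_mul]
    -- conditions in usable form
    have hh3 : (1 - A₁ * A₁p) * E₁ = E₁ - A₁ * (A₁p * E₁) := by
      rw [Matrix.sub_mul, Matrix.one_mul, Matrix.mul_assoc]
    rw [Matrix.sub_mul, Matrix.one_mul, sub_eq_zero, hh3] at c1
    have e1 : M₁ * (M₁p * E₁) = E₁ - A₁ * (A₁p * E₁) := by
      have hx : M₁ * M₁p * (E₁ - A₁ * (A₁p * E₁)) = M₁ * (M₁p * E₁) := by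
        simp only [Matrix.mul_sub, Matrix.mul_assoc, d5', sub_zero]
      rw [hx] at c1; exact c1.symm
    have e1' : ∀ {o : ℕ} (X : Matrix (Fin n) (Fin o) ℂ),
        M₁ * (M₁p * (E₁ * X)) = (E₁ - A₁ * (A₁p * E₁)) * X := by
      intro o X
      calc M₁ * (M₁p * (E₁ * X)) = (M₁ * (M₁p * E₁)) * X := by
            simp only [Matrix.mul_assoc]
        _ = (E₁ - A₁ * (A₁p * E₁)) * X := by rw [e1]
    rw [Matrix.mul_sub, Matrix.mul_one, sub_eq_zero] at c2
    have hh2 : E₁ * (1 - B₁p * B₁) = E₁ - E₁ * (B₁p * B₁) := by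
      rw [Matrix.mul_sub, Matrix.mul_one]
    rw [hh2] at c2
    have e2 : (E₁ - E₁ * (B₁p * B₁)) * (N₁p * N₁) = E₁ - E₁ * (B₁p * B₁) := c2.symm
    rw [Matrix.mul_sub, Matrix.mul_one, sub_eq_zero, hh3] at c3
    have e3 : (E₁ - A₁ * (A₁p * E₁)) * (D₁p * D₁) = E₁ - A₁ * (A₁p * E₁) := c3.symm
    have hh4 : (1 - C₁ * C₁p) * E₁ = E₁ - C₁ * (C₁p * E₁) := by
      rw [Matrix.sub_mul, Matrix.one_mul, Matrix.mul_assoc]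
    rw [Matrix.mul_sub, Matrix.mul_one, sub_eq_zero, hh4] at c4
    have e4 : C₁ * (C₁p * (E₁ - E₁ * (B₁p * B₁))) = E₁ - E₁ * (B₁p * B₁) := by
      have h2 : E₁ - C₁ * (C₁p * E₁)
          = E₁ * (B₁p * B₁) - C₁ * (C₁p * (E₁ * (B₁p * B₁))) := by
        rw [c4]; simp only [Matrix.sub_mul, Matrix.mul_assoc]
      calc C₁ * (C₁p * (E₁ - E₁ * (B₁p * B₁)))
          = C₁ * (C₁p * E₁) - C₁ * (C₁p * (E₁ * (B₁p * B₁))) := by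
            simp only [Matrix.mul_sub]
        _ = E₁ - E₁ * (B₁p * B₁) := (sub_eq_sub_iff_sub_eq_sub.mp h2).symm
    -- the candidate solution
    set Y₀ : Matrix (Fin r) (Fin s) ℂ :=
      M₁p * (E₁ * D₁p) + (C₁p * (E₁ * N₁p) - M₁p * (M₁ * (C₁p * (E₁ * N₁p)))) with hY₀
    have h1 : M₁ * Y₀ * D₁ = E₁ - A₁ * (A₁p * E₁) := by
      calc M₁ * Y₀ * D₁
          = M₁ * (M₁p * (E₁ * (D₁p * D₁)))
            + (M₁ * (C₁p * (E₁ * (N₁p * D₁)))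
              - M₁ * (M₁p * (M₁ * (C₁p * (E₁ * (N₁p * D₁)))))) := by
            rw [hY₀]
            simp only [Matrix.mul_add, Matrix.add_mul, Matrix.mul_sub, Matrix.sub_mul,
              Matrix.mul_assoc]
        _ = M₁ * (M₁p * (E₁ * (D₁p * D₁))) := by
            simp only [mp_m3 hM1, sub_self, add_zero]
        _ = (E₁ - A₁ * (A₁p * E₁)) * (D₁p * D₁) := e1' _
        _ = E₁ - A₁ * (A₁p * E₁) := e3
    have s1 : E₁ * (N₁p * N₁) = E₁ - E₁ * (B₁p * B₁) := by
      calc E₁ * (N₁p * N₁) = (E₁ - E₁ * (B₁p * B₁)) * (N₁p * N₁) := by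
            simp only [Matrix.sub_mul, Matrix.mul_assoc, d7', Matrix.mul_zero, sub_zero]
        _ = E₁ - E₁ * (B₁p * B₁) := e2
    have s2 : C₁ * (C₁p * (E₁ * (N₁p * N₁))) = E₁ - E₁ * (B₁p * B₁) := by
      rw [s1]; exact e4
    have s3 : M₁ * (C₁p * (E₁ * (N₁p * N₁)))
        = (E₁ - E₁ * (B₁p * B₁)) - A₁ * (A₁p * (E₁ - E₁ * (B₁p * B₁))) := by
      calc M₁ * (C₁p * (E₁ * (N₁p * N₁)))
          = (1 - A₁ * A₁p) * (C₁ * (C₁p * (E₁ * (N₁p * N₁)))) := by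
            rw [hM₁, Matrix.mul_assoc]
        _ = (1 - A₁ * A₁p) * (E₁ - E₁ * (B₁p * B₁)) := by rw [s2]
        _ = (E₁ - E₁ * (B₁p * B₁)) - A₁ * (A₁p * (E₁ - E₁ * (B₁p * B₁))) := by
            rw [Matrix.sub_mul, Matrix.one_mul, Matrix.mul_assoc]
    have t13 : M₁p * (E₁ * (D₁p * N₁)) = M₁p * (E₁ - E₁ * (B₁p * B₁)) := by
      calc M₁p * (E₁ * (D₁p * N₁))
          = M₁p * ((E₁ * (D₁p * D₁)) * (1 - B₁p * B₁)) := by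
            rw [hN₁]; simp only [Matrix.mul_assoc]
        _ = M₁p * (((E₁ - A₁ * (A₁p * E₁)) * (D₁p * D₁)) * (1 - B₁p * B₁)) := by
            simp only [Matrix.sub_mul, Matrix.mul_sub, Matrix.mul_one, Matrix.one_mul,
              Matrix.mul_assoc, d6', Matrix.mul_zero, Matrix.zero_mul, sub_zero]
        _ = M₁p * ((E₁ - A₁ * (A₁p * E₁)) * (1 - B₁p * B₁)) := by rw [e3]
        _ = M₁p * (E₁ - E₁ * (B₁p * B₁)) := by
            simp only [Matrix.sub_mul, Matrix.mul_sub, Matrix.mul_one, Matrix.one_mul,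
              Matrix.mul_assoc, d6', Matrix.mul_zero, Matrix.zero_mul, sub_zero]
    have h2 : C₁ * Y₀ * N₁ = E₁ - E₁ * (B₁p * B₁) := by
      calc C₁ * Y₀ * N₁
          = C₁ * (M₁p * (E₁ * (D₁p * N₁)))
            + (C₁ * (C₁p * (E₁ * (N₁p * N₁)))
              - C₁ * (M₁p * (M₁ * (C₁p * (E₁ * (N₁p * N₁)))))) := by
            rw [hY₀]
            simp only [Matrix.mul_add, Matrix.add_mul, Matrix.mul_sub, Matrix.sub_mul,
              Matrix.mul_assoc]
        _ = C₁ * (M₁p * (E₁ - E₁ * (B₁p * B₁)))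
            + ((E₁ - E₁ * (B₁p * B₁))
              - C₁ * (M₁p * (E₁ - E₁ * (B₁p * B₁)))) := by
            rw [t13, s2, s3]
            simp only [Matrix.mul_sub, d6', Matrix.mul_zero, sub_zero]
        _ = E₁ - E₁ * (B₁p * B₁) := by abel
    -- assemble
    have expand1 : (E₁ - C₁ * Y₀ * D₁) - A₁ * (A₁p * (E₁ - C₁ * Y₀ * D₁))
        = (E₁ - A₁ * (A₁p * E₁)) - M₁ * Y₀ * D₁ := by
      rw [hM₁]
      simp only [Matrix.sub_mul, Matrix.mul_sub, Matrix.one_mul, Matrix.mul_assoc]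
      abel
    have hAF : A₁ * (A₁p * (E₁ - C₁ * Y₀ * D₁)) = E₁ - C₁ * Y₀ * D₁ := by
      rw [h1, sub_self] at expand1
      rw [sub_eq_zero] at expand1
      exact expand1.symm
    have expand2 : (E₁ - C₁ * Y₀ * D₁) - (E₁ - C₁ * Y₀ * D₁) * (B₁p * B₁)
        = (E₁ - E₁ * (B₁p * B₁)) - C₁ * Y₀ * N₁ := by
      rw [hN₁]
      simp only [Matrix.mul_sub, Matrix.sub_mul, Matrix.mul_one, Matrix.mul_assoc]
      abel
    have hFB : (E₁ - C₁ * Y₀ * D₁) * (B₁p * B₁) = E₁ - C₁ * Y₀ * D₁ := by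
      rw [h2, sub_self] at expand2
      rw [sub_eq_zero] at expand2
      exact expand2.symm
    refine ⟨A₁p * ((E₁ - C₁ * Y₀ * D₁) * B₁p), Y₀, ?_⟩
    calc A₁ * (A₁p * ((E₁ - C₁ * Y₀ * D₁) * B₁p)) * B₁ + C₁ * Y₀ * D₁
        = A₁ * (A₁p * ((E₁ - C₁ * Y₀ * D₁) * (B₁p * B₁))) + C₁ * Y₀ * D₁ := by
          simp only [Matrix.mul_assoc]
      _ = A₁ * (A₁p * (E₁ - C₁ * Y₀ * D₁)) + C₁ * Y₀ * D₁ := by rw [hFB]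
      _ = (E₁ - C₁ * Y₀ * D₁) + C₁ * Y₀ * D₁ := by rw [hAF]
      _ = E₁ := by abel
end

section
/- Let A₁ ∈ ℂ^{m×p}, B₁ ∈ ℂ^{q×n}, C₁ ∈ ℂ^{m×r}, D₁ ∈ ℂ^{s×n}, E₁ ∈ ℂ^{m×n}. The equation A₁X₁B₁ + C₁X₂D₁ = E₁ is solvable if and only if the following four rank equalities hold: rank[A₁ E₁ C₁] = rank[A₁ C₁]; rank of the vertical block [B₁; E₁; D₁] equals rank of [B₁; D₁]; rank of the 2×2 block matrix [[A₁, E₁],[0, D₁]] equals rank(A₁) + rank(D₁); and rank of [[B₁, 0],[E₁, C₁]] equals rank(B₁) + rank(C₁). -/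
open Matrix

/-!
Over a division ring, a map `f` factors as `A ∘ X ∘ B` exactly when `range f ≤ range A` and
`ker B ≤ ker f`. Hence `A X B + C Y D = E` is solvable iff `E = f + g` with `f` of this kind for
`(A, B)` and `g` for `(C, D)`. For the converse, write `E = a + c` with `range a ≤ range A` and
`range c ≤ range C`, and take `f = a + k`, `g = c - k`, where `k` takes values in
`range A ⊓ range C` and equals `-a` on `ker B` and `c` on `ker D`; the conditions
`E (ker D) ≤ range A`, `E (ker B) ≤ range C` and `ker B ⊓ ker D ≤ ker E` are exactly what is
needed to glue such a `k`.

Each subspace condition is a rank identity: the first two by comparing column spaces and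
kernels, the last two by `rank [[A, E], [0, D]] = rank D + dim (range A + E (ker D))`, obtained
by projecting the column space onto the lower block.
-/

open Module Submodule LinearMap

namespace Submodule

variable {K V W : Type*} [DivisionRing K] [AddCommGroup V] [Module K V] [FiniteDimensional K V]
  [AddCommGroup W] [Module K W]

theorem finrank_sup_eq_left_iff {p q : Submodule K V} :
    finrank K ↥(p ⊔ q) = finrank K p ↔ q ≤ p := by
  refine ⟨fun h => ?_, fun h => by rw [sup_eq_left.2 h]⟩
  rw [eq_of_le_of_finrank_eq le_sup_left h.symm]
  exact le_sup_right

theorem finrank_inf_eq_left_iff {p q : Submodule K V} :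
    finrank K ↥(p ⊓ q) = finrank K p ↔ p ≤ q :=
  ⟨fun h => inf_eq_left.1 (eq_of_le_of_finrank_eq inf_le_left h),
    fun h => by rw [inf_eq_left.2 h]⟩

theorem finrank_map_add_finrank_inf_ker_s4 (p : Submodule K V) (f : V →ₗ[K] W) :
    finrank K ↥(p.map f) + finrank K ↥(p ⊓ ker f) = finrank K p := by
  rw [← range_domRestrict, ← map_comap_subtype, finrank_map_subtype_eq, ← ker_domRestrict]
  exact finrank_range_add_finrank_ker _

end Submodule

namespace LinearMap

variable {K M N P Q : Type*} [DivisionRing K] [AddCommGroup M] [Module K M]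
  [AddCommGroup N] [Module K N] [AddCommGroup P] [Module K P] [AddCommGroup Q] [Module K Q]

theorem exists_comp_eq_of_range_le (A : P →ₗ[K] M) (f : N →ₗ[K] M) (h : range f ≤ range A) :
    ∃ g : N →ₗ[K] P, A ∘ₗ g = f := by
  obtain ⟨g, hg⟩ := Module.projective_lifting_property A.rangeRestrict
    (f.codRestrict _ fun x => h (mem_range_self f x)) A.surjective_rangeRestrict
  exact ⟨g, by simpa using congrArg ((range A).subtype ∘ₗ ·) hg⟩

theorem exists_comp_eq_of_ker_le (B : N →ₗ[K] Q) (f : N →ₗ[K] M) (h : ker B ≤ ker f) :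
    ∃ g : Q →ₗ[K] M, g ∘ₗ B = f ∧ range g ≤ range f := by
  obtain ⟨l, hl⟩ := ((ker B).liftQ B le_rfl).exists_leftInverse_of_injective
    (ker_liftQ_eq_bot _ _ _ le_rfl)
  refine ⟨(ker B).liftQ f h ∘ₗ l, ?_, ?_⟩
  · ext x
    have hx : l (B x) = (ker B).mkQ x := congr($hl ((ker B).mkQ x))
    simp [hx]
  · exact (range_comp_le_range _ _).trans (range_liftQ _ _ h).le

theorem exists_comp_comp_eq_iff (A : P →ₗ[K] M) (B : N →ₗ[K] Q) (f : N →ₗ[K] M) :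
    (∃ X : Q →ₗ[K] P, A ∘ₗ X ∘ₗ B = f) ↔ range f ≤ range A ∧ ker B ≤ ker f := by
  constructor
  · rintro ⟨X, rfl⟩
    exact ⟨range_comp_le_range _ _, (ker_le_ker_comp B X).trans (ker_le_ker_comp _ A)⟩
  · rintro ⟨hr, hk⟩
    obtain ⟨g, rfl, hg⟩ := exists_comp_eq_of_ker_le B f hk
    obtain ⟨X, rfl⟩ := exists_comp_eq_of_range_le A g (hg.trans hr)
    exact ⟨X, rfl⟩

theorem exists_add_eq_of_range_le_sup {A : P →ₗ[K] M} {C : Q →ₗ[K] M} {E : N →ₗ[K] M}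
    (h : range E ≤ range A ⊔ range C) :
    ∃ a c : N →ₗ[K] M, a + c = E ∧ range a ≤ range A ∧ range c ≤ range C := by
  obtain ⟨g, rfl⟩ := exists_comp_eq_of_range_le (A.coprod C) E (by rwa [range_coprod])
  refine ⟨A ∘ₗ fst K P Q ∘ₗ g, C ∘ₗ snd K P Q ∘ₗ g, ?_, range_comp_le_range _ _,
    range_comp_le_range _ _⟩
  ext x
  simp

theorem exists_comp_subtype_eq_of_eqOn_inf (S T : Submodule K N) (u : S →ₗ[K] M)
    (v : T →ₗ[K] M) (huv : ∀ x (hS : x ∈ S) (hT : x ∈ T), u ⟨x, hS⟩ = v ⟨x, hT⟩) :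
    ∃ w : N →ₗ[K] M, w ∘ₗ S.subtype = u ∧ w ∘ₗ T.subtype = v ∧ range w ≤ range u ⊔ range v := by
  have hker : ker (S.subtype.coprod T.subtype) ≤ ker (u.coprod v) := by
    rintro ⟨s, t⟩ hst
    replace hst : (s : N) + t = 0 := hst
    have hsT : (s : N) ∈ T := by
      rw [eq_neg_of_add_eq_zero_left hst]
      exact neg_mem t.2
    have hst' : (⟨s, hsT⟩ : T) + t = 0 := Subtype.ext hst
    simp [huv s s.2 hsT, ← map_add, hst']
  obtain ⟨w, hw, hr⟩ := exists_comp_eq_of_ker_le _ _ hker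
  refine ⟨w, ?_, ?_, by rwa [range_coprod] at hr⟩
  · rw [← coprod_inl S.subtype T.subtype, ← comp_assoc, hw, coprod_inl]
  · rw [← coprod_inr S.subtype T.subtype, ← comp_assoc, hw, coprod_inr]

variable {P' Q' : Type*} [AddCommGroup P'] [Module K P'] [AddCommGroup Q'] [Module K Q']

theorem exists_comp_comp_add_comp_comp_eq_of_le {A : P →ₗ[K] M} {B : N →ₗ[K] Q}
    {C : P' →ₗ[K] M} {D : N →ₗ[K] Q'} {E : N →ₗ[K] M} (hAC : range E ≤ range A ⊔ range C)
    (hBD : ker B ⊓ ker D ≤ ker E) (hDA : (ker D).map E ≤ range A)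
    (hBC : (ker B).map E ≤ range C) :
    ∃ (X : Q →ₗ[K] P) (Y : Q' →ₗ[K] P'), A ∘ₗ X ∘ₗ B + C ∘ₗ Y ∘ₗ D = E := by
  obtain ⟨a, c, rfl, ha, hc⟩ := exists_add_eq_of_range_le_sup hAC
  have hu : range (-(a ∘ₗ (ker B).subtype)) ≤ range A ⊓ range C := by
    rintro _ ⟨⟨x, hx⟩, rfl⟩
    refine ⟨neg_mem (ha ⟨x, rfl⟩), ?_⟩
    have hax : -a x = c x - (a + c) x := by rw [add_apply]; abel
    show -a x ∈ range C
    exact hax ▸ sub_mem (hc ⟨x, rfl⟩) (hBC ⟨x, hx, rfl⟩)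
  have hv : range (c ∘ₗ (ker D).subtype) ≤ range A ⊓ range C := by
    rintro _ ⟨⟨x, hx⟩, rfl⟩
    refine ⟨?_, hc ⟨x, rfl⟩⟩
    have hcx : c x = (a + c) x - a x := by rw [add_apply]; abel
    exact hcx ▸ sub_mem (hDA ⟨x, hx, rfl⟩) (ha ⟨x, rfl⟩)
  obtain ⟨k, hkB, hkD, hk⟩ := exists_comp_subtype_eq_of_eqOn_inf (ker B) (ker D)
    (-(a ∘ₗ (ker B).subtype)) (c ∘ₗ (ker D).subtype) fun x hxB hxD => by
      simpa [neg_eq_iff_add_eq_zero] using hBD ⟨hxB, hxD⟩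
  have hkAC : ∀ x, k x ∈ range A ⊓ range C := fun x => sup_le hu hv (hk ⟨x, rfl⟩)
  have hf : range (a + k) ≤ range A ∧ ker B ≤ ker (a + k) := by
    refine ⟨?_, fun x hx => ?_⟩
    · rintro _ ⟨x, rfl⟩
      exact add_mem (ha ⟨x, rfl⟩) (hkAC x).1
    · have hkx : k x = -a x := congr($hkB ⟨x, hx⟩)
      simp [hkx]
  have hg : range (c - k) ≤ range C ∧ ker D ≤ ker (c - k) := by
    refine ⟨?_, fun x hx => ?_⟩
    · rintro _ ⟨x, rfl⟩
      exact sub_mem (hc ⟨x, rfl⟩) (hkAC x).2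
    · have hkx : k x = c x := congr($hkD ⟨x, hx⟩)
      simp [hkx]
  obtain ⟨X, hX⟩ := (exists_comp_comp_eq_iff A B _).2 hf
  obtain ⟨Y, hY⟩ := (exists_comp_comp_eq_iff C D _).2 hg
  exact ⟨X, Y, by rw [hX, hY]; abel⟩

theorem exists_comp_comp_add_comp_comp_eq_iff (A : P →ₗ[K] M) (B : N →ₗ[K] Q)
    (C : P' →ₗ[K] M) (D : N →ₗ[K] Q') (E : N →ₗ[K] M) :
    (∃ (X : Q →ₗ[K] P) (Y : Q' →ₗ[K] P'), A ∘ₗ X ∘ₗ B + C ∘ₗ Y ∘ₗ D = E) ↔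
      range E ≤ range A ⊔ range C ∧ ker B ⊓ ker D ≤ ker E ∧
        (ker D).map E ≤ range A ∧ (ker B).map E ≤ range C := by
  refine ⟨?_, fun ⟨hAC, hBD, hDA, hBC⟩ => exists_comp_comp_add_comp_comp_eq_of_le hAC hBD hDA hBC⟩
  rintro ⟨X, Y, rfl⟩
  obtain ⟨hfA, hfB⟩ := (exists_comp_comp_eq_iff A B _).1 ⟨X, rfl⟩
  obtain ⟨hgC, hgD⟩ := (exists_comp_comp_eq_iff C D _).1 ⟨Y, rfl⟩
  refine ⟨?_, ?_, ?_, ?_⟩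
  · rintro _ ⟨x, rfl⟩
    exact add_mem_sup (hfA ⟨x, rfl⟩) (hgC ⟨x, rfl⟩)
  · rintro x ⟨hxB, hxD⟩
    simp [mem_ker.mp (hfB hxB), mem_ker.mp (hgD hxD)]
  · rintro _ ⟨x, hx, rfl⟩
    simp [mem_ker.mp (hgD hx)]
  · rintro _ ⟨x, hx, rfl⟩
    simp [mem_ker.mp (hfB hx)]

end LinearMap

namespace Matrix

variable {K : Type*} [Field K] {m m₁ m₂ n n₁ n₂ : Type*} [Fintype n] [Fintype n₁] [Fintype n₂]

theorem range_mulVecLin_fromCols_s4 (A : Matrix m n₁ K) (C : Matrix m n₂ K) :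
    range (fromCols A C).mulVecLin = range A.mulVecLin ⊔ range C.mulVecLin := by
  apply le_antisymm
  · rintro _ ⟨v, rfl⟩
    rw [mulVecLin_apply, fromCols_mulVec]
    exact add_mem_sup ⟨_, rfl⟩ ⟨_, rfl⟩
  · refine sup_le ?_ ?_ <;> rintro _ ⟨v, rfl⟩
    · exact ⟨Sum.elim v 0, by simp⟩
    · exact ⟨Sum.elim 0 v, by simp⟩

theorem ker_mulVecLin_fromRows_s4 (B : Matrix m₁ n K) (D : Matrix m₂ n K) :
    ker (fromRows B D).mulVecLin = ker B.mulVecLin ⊓ ker D.mulVecLin := by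
  ext v
  rw [mem_inf, mem_ker, mem_ker, mem_ker, mulVecLin_apply, fromRows_mulVec,
    ← Sum.elim_zero_zero, Sum.elim_eq_iff]
  rfl

theorem rank_fromCols_fromCols_eq_iff [Fintype m] (A : Matrix m n₁ K) (E : Matrix m n K)
    (C : Matrix m n₂ K) :
    (fromCols A (fromCols E C)).rank = (fromCols A C).rank ↔
      range E.mulVecLin ≤ range A.mulVecLin ⊔ range C.mulVecLin := by
  rw [rank, rank, range_mulVecLin_fromCols_s4, range_mulVecLin_fromCols_s4, range_mulVecLin_fromCols_s4,
    sup_left_comm, sup_comm, finrank_sup_eq_left_iff]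

theorem rank_fromRows_fromRows_eq_iff (B : Matrix m₁ n K) (E : Matrix m n K)
    (D : Matrix m₂ n K) :
    (fromRows B (fromRows E D)).rank = (fromRows B D).rank ↔
      ker B.mulVecLin ⊓ ker D.mulVecLin ≤ ker E.mulVecLin := by
  have h₁ := finrank_range_add_finrank_ker (fromRows B (fromRows E D)).mulVecLin
  have h₂ := finrank_range_add_finrank_ker (fromRows B D).mulVecLin
  rw [ker_mulVecLin_fromRows_s4, ker_mulVecLin_fromRows_s4, inf_left_comm, inf_comm (ker _)] at h₁
  rw [ker_mulVecLin_fromRows_s4] at h₂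
  rw [← finrank_inf_eq_left_iff, rank, rank]
  omega

theorem rank_fromBlocks_zero₂₁ [Fintype m₁] [Fintype m₂] (A : Matrix m₁ n₁ K)
    (E : Matrix m₁ n K) (D : Matrix m₂ n K) :
    (fromBlocks A E 0 D).rank =
      D.rank + finrank K ↥(range A.mulVecLin ⊔ (ker D.mulVecLin).map E.mulVecLin) := by
  set R := range (fromBlocks A E 0 D).mulVecLin
  set upper := funLeft K K (Sum.inl : m₁ → m₁ ⊕ m₂)
  set lower := funLeft K K (Sum.inr : m₂ → m₁ ⊕ m₂)
  have hupper : ∀ x, upper (fromBlocks A E 0 D *ᵥ x) = A *ᵥ (x ∘ Sum.inl) + E *ᵥ (x ∘ Sum.inr) :=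
    fun x => by ext; simp [upper, funLeft_apply, fromBlocks_mulVec]
  have hlower : ∀ x, lower (fromBlocks A E 0 D *ᵥ x) = D *ᵥ (x ∘ Sum.inr) :=
    fun x => by ext; simp [lower, funLeft_apply, fromBlocks_mulVec]
  have hmap_lower : R.map lower = range D.mulVecLin := by
    have hcomp : lower ∘ₗ (fromBlocks A E 0 D).mulVecLin = D.mulVecLin ∘ₗ funLeft K K Sum.inr :=
      LinearMap.ext hlower
    rw [← range_comp, hcomp, range_comp_of_range_eq_top _
      (range_eq_top.2 (funLeft_surjective_of_injective _ _ _ Sum.inr_injective))]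
  have hmap_upper : (R ⊓ ker lower).map upper =
      range A.mulVecLin ⊔ (ker D.mulVecLin).map E.mulVecLin := by
    apply le_antisymm
    · rintro _ ⟨_, ⟨⟨x, rfl⟩, hx⟩, rfl⟩
      have hx' : D *ᵥ (x ∘ Sum.inr) = 0 := by rw [← hlower]; exact hx
      rw [mulVecLin_apply, hupper]
      exact add_mem_sup ⟨_, rfl⟩ ⟨_, hx', rfl⟩
    · intro v hv
      obtain ⟨_, ⟨y₁, rfl⟩, _, ⟨y₂, hy₂, rfl⟩, rfl⟩ := mem_sup.1 hv
      refine ⟨fromBlocks A E 0 D *ᵥ Sum.elim y₁ y₂, ⟨⟨_, rfl⟩, ?_⟩, ?_⟩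
      · simpa [hlower] using hy₂
      · simp [hupper]
  have hdisj : R ⊓ ker lower ⊓ ker upper = ⊥ := by
    refine eq_bot_iff.2 fun v ⟨⟨_, hl⟩, hu⟩ => ?_
    rw [mem_bot]
    ext (i | i)
    exacts [congrFun hu i, congrFun hl i]
  have h₁ := R.finrank_map_add_finrank_inf_ker_s4 lower
  have h₂ := (R ⊓ ker lower).finrank_map_add_finrank_inf_ker_s4 upper
  rw [hdisj, finrank_bot, add_zero, hmap_upper] at h₂
  rw [rank, rank, ← h₁, hmap_lower, h₂]

theorem rank_fromBlocks_zero₂₁_eq_iff [Fintype m₁] [Fintype m₂] (A : Matrix m₁ n₁ K)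
    (E : Matrix m₁ n K) (D : Matrix m₂ n K) :
    (fromBlocks A E 0 D).rank = A.rank + D.rank ↔
      (ker D.mulVecLin).map E.mulVecLin ≤ range A.mulVecLin := by
  rw [rank_fromBlocks_zero₂₁, add_comm A.rank, Nat.add_left_cancel_iff, rank,
    finrank_sup_eq_left_iff]

theorem rank_fromBlocks_zero₁₂_eq_iff [Fintype m₁] [Fintype m₂] (B : Matrix m₂ n K)
    (E : Matrix m₁ n K) (C : Matrix m₁ n₁ K) :
    (fromBlocks B 0 E C).rank = B.rank + C.rank ↔
      (ker B.mulVecLin).map E.mulVecLin ≤ range C.mulVecLin := by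
  have hswap : (fromBlocks B 0 E C).submatrix (Equiv.sumComm _ _) (Equiv.sumComm _ _) =
      fromBlocks C E 0 B :=
    fromBlocks_submatrix_sum_swap_sum_swap B 0 E C
  rw [← rank_submatrix _ (Equiv.sumComm _ _) (Equiv.sumComm _ _), hswap, add_comm,
    rank_fromBlocks_zero₂₁_eq_iff]

variable {p q r s : Type*} [Fintype p] [Fintype q] [Fintype r] [Fintype s]

theorem exists_mul_mul_add_mul_mul_eq_iff_mulVecLin (A : Matrix m p K) (B : Matrix q n K)
    (C : Matrix m r K) (D : Matrix s n K) (E : Matrix m n K) :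
    (∃ (X : Matrix p q K) (Y : Matrix r s K), A * X * B + C * Y * D = E) ↔
      ∃ (X : (q → K) →ₗ[K] p → K) (Y : (s → K) →ₗ[K] r → K),
        A.mulVecLin ∘ₗ X ∘ₗ B.mulVecLin + C.mulVecLin ∘ₗ Y ∘ₗ D.mulVecLin = E.mulVecLin := by
  classical
  constructor
  · rintro ⟨X, Y, rfl⟩
    exact ⟨X.mulVecLin, Y.mulVecLin, by simp only [mulVecLin_add, mulVecLin_mul, comp_assoc]⟩
  · rintro ⟨X, Y, h⟩
    refine ⟨LinearMap.toMatrix' X, LinearMap.toMatrix' Y, toLin'.injective ?_⟩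
    have hX : (LinearMap.toMatrix' X).mulVecLin = X := toLin'_toMatrix' X
    have hY : (LinearMap.toMatrix' Y).mulVecLin = Y := toLin'_toMatrix' Y
    simpa only [toLin'_apply', mulVecLin_add, mulVecLin_mul, hX, hY, comp_assoc] using h

end Matrix

theorem two_sided_sylvester_solvable_iff_ranks {m n p q r s : ℕ}
    (A₁ : Matrix (Fin m) (Fin p) ℂ) (B₁ : Matrix (Fin q) (Fin n) ℂ)
    (C₁ : Matrix (Fin m) (Fin r) ℂ) (D₁ : Matrix (Fin s) (Fin n) ℂ)
    (E₁ : Matrix (Fin m) (Fin n) ℂ) :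
    (∃ (X₁ : Matrix (Fin p) (Fin q) ℂ) (X₂ : Matrix (Fin r) (Fin s) ℂ),
      A₁ * X₁ * B₁ + C₁ * X₂ * D₁ = E₁) ↔
    ((Matrix.fromCols A₁ (Matrix.fromCols E₁ C₁)).rank =
        (Matrix.fromCols A₁ C₁).rank ∧
     (Matrix.fromRows B₁ (Matrix.fromRows E₁ D₁)).rank =
        (Matrix.fromRows B₁ D₁).rank ∧
     (Matrix.fromBlocks A₁ E₁ 0 D₁).rank = A₁.rank + D₁.rank ∧
     (Matrix.fromBlocks B₁ 0 E₁ C₁).rank = B₁.rank + C₁.rank) := by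
  rw [exists_mul_mul_add_mul_mul_eq_iff_mulVecLin, exists_comp_comp_add_comp_comp_eq_iff,
    rank_fromCols_fromCols_eq_iff, rank_fromRows_fromRows_eq_iff, rank_fromBlocks_zero₂₁_eq_iff,
    rank_fromBlocks_zero₁₂_eq_iff]
end

section
/- Let A₁, C₁, E₁ ∈ ℂ^{m×n} with appropriate sizes so that A₁X₁B₁ + C₁X₂D₁ = E₁ makes sense, and suppose the equation is consistent. Define M₁ = R_{A₁}C₁, N₁ = D₁L_{B₁}, S₁ = C₁L_{M₁}. Then X₁ = A₁⁺E₁B₁⁺ - A₁⁺C₁M₁⁺E₁B₁⁺ - A₁⁺S₁C₁⁺E₁N₁⁺D₁B₁⁺ and X₂ = M₁⁺E₁D₁⁺ + S₁⁺S₁C₁⁺E₁N₁⁺ form a particular solution, i.e., A₁X₁B₁ + C₁X₂D₁ = E₁. -/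
open Matrix

lemma mp_absorb_left {a b : ℕ} {P : Matrix (Fin a) (Fin b) ℂ}
    {Pp : Matrix (Fin b) (Fin a) ℂ} (hP : IsMoorePenrose P Pp)
    {Q : Matrix (Fin a) (Fin a) ℂ} (hQ : Qᴴ = Q) (h : Q * P = 0) :
    Pp * Q = 0 := by
  have h1 : Pᴴ * Q = 0 := by
    rw [← hQ, ← conjTranspose_mul, h, conjTranspose_zero]
  calc Pp * Q = (Pp * P * Pp) * Q := by rw [hP.2.1]
    _ = Pp * ((P * Pp) * Q) := by simp only [Matrix.mul_assoc]
    _ = Pp * ((P * Pp)ᴴ * Q) := by rw [hP.2.2.1]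
    _ = Pp * (Ppᴴ * (Pᴴ * Q)) := by simp only [conjTranspose_mul, Matrix.mul_assoc]
    _ = 0 := by rw [h1, Matrix.mul_zero, Matrix.mul_zero]

lemma mp_absorb_right {a b : ℕ} {P : Matrix (Fin a) (Fin b) ℂ}
    {Pp : Matrix (Fin b) (Fin a) ℂ} (hP : IsMoorePenrose P Pp)
    {Q : Matrix (Fin b) (Fin b) ℂ} (hQ : Qᴴ = Q) (h : P * Q = 0) :
    Q * Pp = 0 := by
  have h1 : Q * Pᴴ = 0 := by
    rw [← hQ, ← conjTranspose_mul, h, conjTranspose_zero]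
  calc Q * Pp = Q * (Pp * P * Pp) := by rw [hP.2.1]
    _ = Q * ((Pp * P)ᴴ * Pp) := by rw [hP.2.2.2]
    _ = (Q * Pᴴ) * (Ppᴴ * Pp) := by simp only [conjTranspose_mul, Matrix.mul_assoc]
    _ = 0 := by rw [h1, Matrix.zero_mul]

set_option maxHeartbeats 2000000 in
theorem particular_solution_two_sided_sylvester {m n p q r s : ℕ}
    (A₁ : Matrix (Fin m) (Fin p) ℂ) (B₁ : Matrix (Fin q) (Fin n) ℂ)
    (C₁ : Matrix (Fin m) (Fin r) ℂ) (D₁ : Matrix (Fin s) (Fin n) ℂ)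
    (E₁ : Matrix (Fin m) (Fin n) ℂ)
    (A₁p : Matrix (Fin p) (Fin m) ℂ) (B₁p : Matrix (Fin n) (Fin q) ℂ)
    (C₁p : Matrix (Fin r) (Fin m) ℂ) (D₁p : Matrix (Fin n) (Fin s) ℂ)
    (hA : IsMoorePenrose A₁ A₁p) (hB : IsMoorePenrose B₁ B₁p)
    (hC : IsMoorePenrose C₁ C₁p) (hD : IsMoorePenrose D₁ D₁p)
    (M₁ : Matrix (Fin m) (Fin r) ℂ) (hM₁ : M₁ = (1 - A₁ * A₁p) * C₁)
    (N₁ : Matrix (Fin s) (Fin n) ℂ) (hN₁ : N₁ = D₁ * (1 - B₁p * B₁))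
    (M₁p : Matrix (Fin r) (Fin m) ℂ) (N₁p : Matrix (Fin n) (Fin s) ℂ)
    (hM : IsMoorePenrose M₁ M₁p) (hN : IsMoorePenrose N₁ N₁p)
    (S₁ : Matrix (Fin m) (Fin r) ℂ) (hS₁ : S₁ = C₁ * (1 - M₁p * M₁))
    (S₁p : Matrix (Fin r) (Fin m) ℂ) (hS : IsMoorePenrose S₁ S₁p)
    (hcons : ∃ (X₁ : Matrix (Fin p) (Fin q) ℂ) (X₂ : Matrix (Fin r) (Fin s) ℂ),
      A₁ * X₁ * B₁ + C₁ * X₂ * D₁ = E₁) :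
    A₁ * (A₁p * E₁ * B₁p - A₁p * C₁ * M₁p * E₁ * B₁p
          - A₁p * S₁ * C₁p * E₁ * N₁p * D₁ * B₁p) * B₁ +
    C₁ * (M₁p * E₁ * D₁p + S₁p * S₁ * C₁p * E₁ * N₁p) * D₁ = E₁ := by
  obtain ⟨X₁, X₂, hE⟩ := hcons
  -- right-associated Penrose identities
  have rB1 : B₁ * (B₁p * B₁) = B₁ := by rw [← Matrix.mul_assoc, hB.1]
  have rC1 : C₁ * (C₁p * C₁) = C₁ := by rw [← Matrix.mul_assoc, hC.1]
  have rD1 : D₁ * (D₁p * D₁) = D₁ := by rw [← Matrix.mul_assoc, hD.1]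
  have rM1 : M₁ * (M₁p * M₁) = M₁ := by rw [← Matrix.mul_assoc, hM.1]
  have rN1 : N₁ * (N₁p * N₁) = N₁ := by rw [← Matrix.mul_assoc, hN.1]
  -- basic structural facts
  have h1 : A₁ * A₁p * C₁ = C₁ - M₁ := by
    rw [hM₁]; simp only [Matrix.sub_mul, Matrix.one_mul]; abel
  have f1 : (A₁ * A₁p) * M₁ = 0 := by
    rw [hM₁]
    simp only [Matrix.sub_mul, Matrix.mul_sub, Matrix.one_mul, Matrix.mul_assoc]
    have : A₁ * (A₁p * (A₁ * (A₁p * C₁))) = A₁ * (A₁p * C₁) := by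
      simp only [← Matrix.mul_assoc, hA.1]
    rw [this, sub_self]
  have f2 : M₁p * A₁ * A₁p = 0 := by
    have := mp_absorb_left hM hA.2.2.1 f1
    rwa [← Matrix.mul_assoc] at this
  have h6 : D₁ * (B₁p * B₁) = D₁ - N₁ := by
    rw [hN₁]; simp only [Matrix.mul_sub, Matrix.mul_one]; abel
  have f3 : N₁ * (B₁p * B₁) = 0 := by
    rw [hN₁]
    simp only [Matrix.mul_sub, Matrix.sub_mul, Matrix.mul_one, Matrix.one_mul,
      Matrix.mul_assoc, rB1, sub_self]
  have f4 : (B₁p * B₁) * N₁p = 0 := mp_absorb_right hN hB.2.2.2 f3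
  have f5 : S₁ * (M₁p * M₁) = 0 := by
    rw [hS₁]
    simp only [Matrix.mul_sub, Matrix.sub_mul, Matrix.mul_one, Matrix.one_mul,
      Matrix.mul_assoc, rM1, sub_self]
  have f6 : (M₁p * M₁) * S₁p = 0 := mp_absorb_right hS hM.2.2.2 f5
  have h2 : A₁ * A₁p * S₁ = S₁ := by
    calc A₁ * A₁p * S₁ = (A₁ * A₁p * C₁) * (1 - M₁p * M₁) := by
          rw [hS₁]; simp only [← Matrix.mul_assoc]
      _ = (C₁ - M₁) * (1 - M₁p * M₁) := by rw [h1]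
      _ = C₁ - C₁ * (M₁p * M₁) - M₁ + M₁ * (M₁p * M₁) := by
          simp only [Matrix.sub_mul, Matrix.mul_sub, Matrix.mul_one]; abel
      _ = C₁ - C₁ * (M₁p * M₁) := by rw [rM1]; abel
      _ = S₁ := by rw [hS₁, Matrix.mul_sub, Matrix.mul_one]
  have hC_splitM : C₁ = C₁ * (M₁p * M₁) + S₁ := by
    rw [hS₁]; simp only [Matrix.mul_sub, Matrix.mul_one]; abel
  have h7 : C₁ * (S₁p * S₁) = S₁ := by
    calc C₁ * (S₁p * S₁) = (C₁ * (M₁p * M₁) + S₁) * (S₁p * S₁) := by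
          conv_lhs => rw [hC_splitM]
      _ = C₁ * (M₁p * M₁ * S₁p) * S₁ + S₁ * S₁p * S₁ := by
          simp only [Matrix.add_mul, Matrix.mul_assoc]
      _ = S₁ := by rw [f6, hS.1, Matrix.mul_zero, Matrix.zero_mul, zero_add]
  have hMpC : M₁p * C₁ = M₁p * M₁ := by
    have hC_splitA : C₁ = A₁ * A₁p * C₁ + M₁ := by
      rw [hM₁]; simp only [Matrix.sub_mul, Matrix.one_mul]; abel
    calc M₁p * C₁ = M₁p * (A₁ * A₁p * C₁ + M₁) := by conv_lhs => rw [hC_splitA]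
      _ = M₁p * A₁ * A₁p * C₁ + M₁p * M₁ := by
          simp only [Matrix.mul_add, ← Matrix.mul_assoc]
      _ = M₁p * M₁ := by rw [f2, Matrix.zero_mul, zero_add]
  have hMCC : M₁ * (C₁p * C₁) = M₁ := by
    calc M₁ * (C₁p * C₁) = (1 - A₁ * A₁p) * (C₁ * (C₁p * C₁)) := by
          rw [hM₁]; simp only [Matrix.mul_assoc]
      _ = M₁ := by rw [rC1, ← hM₁]
  -- consistency consequences
  have hRA : E₁ - A₁ * A₁p * E₁ = M₁ * X₂ * D₁ := by
    conv_lhs => rw [← hE]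
    simp only [Matrix.mul_add, ← Matrix.mul_assoc]
    rw [hA.1, h1]
    simp only [Matrix.sub_mul, Matrix.mul_assoc]
    abel
  have e_split : E₁ = A₁ * A₁p * E₁ + M₁ * X₂ * D₁ := by rw [← hRA]; abel
  have hMpE : M₁p * E₁ = M₁p * M₁ * X₂ * D₁ := by
    calc M₁p * E₁ = M₁p * (A₁ * A₁p * E₁ + M₁ * X₂ * D₁) := by
          conv_lhs => rw [e_split]
      _ = M₁p * A₁ * A₁p * E₁ + M₁p * M₁ * X₂ * D₁ := by
          simp only [Matrix.mul_add, ← Matrix.mul_assoc]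
      _ = M₁p * M₁ * X₂ * D₁ := by rw [f2, Matrix.zero_mul, zero_add]
  have h3 : M₁ * M₁p * E₁ = E₁ - A₁ * A₁p * E₁ := by
    calc M₁ * M₁p * E₁ = M₁ * (M₁p * E₁) := by rw [Matrix.mul_assoc]
      _ = M₁ * (M₁p * M₁ * X₂ * D₁) := by rw [hMpE]
      _ = M₁ * (M₁p * M₁) * X₂ * D₁ := by simp only [← Matrix.mul_assoc]
      _ = M₁ * X₂ * D₁ := by rw [rM1]
      _ = E₁ - A₁ * A₁p * E₁ := hRA.symm
  have hLB : E₁ - E₁ * (B₁p * B₁) = C₁ * X₂ * N₁ := by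
    conv_lhs => rw [← hE]
    simp only [Matrix.add_mul, Matrix.mul_assoc]
    rw [rB1, h6]
    simp only [Matrix.mul_sub, Matrix.mul_assoc]
    abel
  have e_splitB : E₁ = C₁ * X₂ * N₁ + E₁ * (B₁p * B₁) := by rw [← hLB]; abel
  have hENN : E₁ * (N₁p * N₁) = C₁ * X₂ * N₁ := by
    calc E₁ * (N₁p * N₁)
        = (C₁ * X₂ * N₁ + E₁ * (B₁p * B₁)) * (N₁p * N₁) := by
          conv_lhs => rw [e_splitB]
      _ = C₁ * X₂ * (N₁ * (N₁p * N₁)) + E₁ * (B₁p * B₁ * N₁p) * N₁ := by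
          simp only [Matrix.add_mul, Matrix.mul_assoc]
      _ = C₁ * X₂ * N₁ := by
          rw [rN1, f4, Matrix.mul_zero, Matrix.zero_mul, add_zero]
  have h5 : E₁ * (B₁p * B₁) = E₁ - E₁ * (N₁p * N₁) := by
    rw [hENN, ← hLB]; abel
  have hENp : E₁ * N₁p = C₁ * (X₂ * (N₁ * N₁p)) := by
    calc E₁ * N₁p = E₁ * (N₁p * N₁ * N₁p) := by conv_lhs => rw [← hN.2.1]
      _ = E₁ * (N₁p * N₁) * N₁p := by simp only [Matrix.mul_assoc]
      _ = C₁ * X₂ * N₁ * N₁p := by rw [hENN]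
      _ = C₁ * (X₂ * (N₁ * N₁p)) := by simp only [Matrix.mul_assoc]
  -- the key cancellation: C M⁺ E N⁺ + S C⁺ E N⁺ = E N⁺
  have t1 : C₁ * M₁p * (E₁ * N₁p) = C₁ * (M₁p * M₁) * (X₂ * (N₁ * N₁p)) := by
    calc C₁ * M₁p * (E₁ * N₁p) = C₁ * (M₁p * C₁) * (X₂ * (N₁ * N₁p)) := by
          rw [hENp]; simp only [Matrix.mul_assoc]
      _ = C₁ * (M₁p * M₁) * (X₂ * (N₁ * N₁p)) := by rw [hMpC]
  have t2 : S₁ * C₁p * (E₁ * N₁p)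
      = C₁ * (X₂ * (N₁ * N₁p)) - C₁ * (M₁p * M₁) * (X₂ * (N₁ * N₁p)) := by
    calc S₁ * C₁p * (E₁ * N₁p)
        = C₁ * (1 - M₁p * M₁) * (C₁p * (C₁ * (X₂ * (N₁ * N₁p)))) := by
          rw [hENp, hS₁]; simp only [Matrix.mul_assoc]
      _ = C₁ * (C₁p * C₁) * (X₂ * (N₁ * N₁p))
          - C₁ * (M₁p * (M₁ * (C₁p * C₁))) * (X₂ * (N₁ * N₁p)) := by
          simp only [Matrix.mul_sub, Matrix.sub_mul, Matrix.mul_one,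
            Matrix.one_mul, Matrix.mul_assoc]
      _ = C₁ * (X₂ * (N₁ * N₁p)) - C₁ * (M₁p * M₁) * (X₂ * (N₁ * N₁p)) := by
          rw [rC1, hMCC]
  have h8core : C₁ * M₁p * (E₁ * N₁p) + S₁ * C₁p * (E₁ * N₁p) = E₁ * N₁p := by
    rw [t1, t2, hENp]; abel
  have h8' : C₁ * M₁p * E₁ * N₁p * N₁ + S₁ * C₁p * E₁ * N₁p * N₁
      = E₁ * N₁p * N₁ := by
    have h9 := congrArg (· * N₁) h8core
    simp only [Matrix.add_mul, Matrix.mul_assoc] at h9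
    simp only [Matrix.add_mul, Matrix.mul_assoc]
    exact h9
  -- term-by-term reductions
  have T1 : A₁ * (A₁p * E₁ * B₁p) * B₁
      = A₁ * A₁p * E₁ - A₁ * A₁p * E₁ * N₁p * N₁ := by
    calc A₁ * (A₁p * E₁ * B₁p) * B₁ = A₁ * A₁p * (E₁ * (B₁p * B₁)) := by
          simp only [Matrix.mul_assoc]
      _ = A₁ * A₁p * (E₁ - E₁ * (N₁p * N₁)) := by rw [h5]
      _ = A₁ * A₁p * E₁ - A₁ * A₁p * E₁ * N₁p * N₁ := by
          simp only [Matrix.mul_sub, Matrix.mul_assoc]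
  have h3nn : M₁ * M₁p * (E₁ * (N₁p * N₁))
      = E₁ * N₁p * N₁ - A₁ * A₁p * E₁ * N₁p * N₁ := by
    calc M₁ * M₁p * (E₁ * (N₁p * N₁)) = (M₁ * M₁p * E₁) * (N₁p * N₁) := by
          simp only [Matrix.mul_assoc]
      _ = (E₁ - A₁ * A₁p * E₁) * (N₁p * N₁) := by rw [h3]
      _ = E₁ * N₁p * N₁ - A₁ * A₁p * E₁ * N₁p * N₁ := by
          simp only [Matrix.sub_mul, Matrix.mul_assoc]
  have T2 : A₁ * (A₁p * C₁ * M₁p * E₁ * B₁p) * B₁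
      = C₁ * M₁p * E₁ - C₁ * M₁p * E₁ * N₁p * N₁ - E₁ + A₁ * A₁p * E₁
        + E₁ * N₁p * N₁ - A₁ * A₁p * E₁ * N₁p * N₁ := by
    calc A₁ * (A₁p * C₁ * M₁p * E₁ * B₁p) * B₁
        = (A₁ * A₁p * C₁) * (M₁p * (E₁ * (B₁p * B₁))) := by
          simp only [Matrix.mul_assoc]
      _ = (C₁ - M₁) * (M₁p * (E₁ - E₁ * (N₁p * N₁))) := by rw [h1, h5]
      _ = C₁ * M₁p * E₁ - C₁ * M₁p * (E₁ * (N₁p * N₁)) - M₁ * M₁p * E₁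
          + M₁ * M₁p * (E₁ * (N₁p * N₁)) := by
          simp only [Matrix.sub_mul, Matrix.mul_sub, Matrix.mul_assoc]; abel
      _ = _ := by
          rw [h3, h3nn]
          simp only [Matrix.mul_assoc]
          abel
  have T3 : A₁ * (A₁p * S₁ * C₁p * E₁ * N₁p * D₁ * B₁p) * B₁
      = S₁ * C₁p * E₁ * N₁p * D₁ - S₁ * C₁p * E₁ * N₁p * N₁ := by
    calc A₁ * (A₁p * S₁ * C₁p * E₁ * N₁p * D₁ * B₁p) * B₁
        = (A₁ * A₁p * S₁) * (C₁p * (E₁ * (N₁p * (D₁ * (B₁p * B₁))))) := by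
          simp only [Matrix.mul_assoc]
      _ = S₁ * (C₁p * (E₁ * (N₁p * (D₁ - N₁)))) := by rw [h2, h6]
      _ = S₁ * C₁p * E₁ * N₁p * D₁ - S₁ * C₁p * E₁ * N₁p * N₁ := by
          simp only [Matrix.mul_sub, Matrix.mul_assoc]
  have T4 : C₁ * (M₁p * E₁ * D₁p) * D₁ = C₁ * M₁p * E₁ := by
    calc C₁ * (M₁p * E₁ * D₁p) * D₁ = C₁ * ((M₁p * E₁) * (D₁p * D₁)) := by
          simp only [Matrix.mul_assoc]
      _ = C₁ * ((M₁p * M₁ * X₂ * D₁) * (D₁p * D₁)) := by rw [hMpE]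
      _ = C₁ * (M₁p * M₁ * X₂ * (D₁ * (D₁p * D₁))) := by
          simp only [Matrix.mul_assoc]
      _ = C₁ * (M₁p * M₁ * X₂ * D₁) := by rw [rD1]
      _ = C₁ * (M₁p * E₁) := by rw [← hMpE]
      _ = C₁ * M₁p * E₁ := by rw [← Matrix.mul_assoc]
  have T5 : C₁ * (S₁p * S₁ * C₁p * E₁ * N₁p) * D₁
      = S₁ * C₁p * E₁ * N₁p * D₁ := by
    calc C₁ * (S₁p * S₁ * C₁p * E₁ * N₁p) * D₁
        = (C₁ * (S₁p * S₁)) * (C₁p * (E₁ * (N₁p * D₁))) := by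
          simp only [Matrix.mul_assoc]
      _ = S₁ * (C₁p * (E₁ * (N₁p * D₁))) := by rw [h7]
      _ = S₁ * C₁p * E₁ * N₁p * D₁ := by simp only [Matrix.mul_assoc]
  have key : E₁ - E₁ * N₁p * N₁
      + (C₁ * M₁p * E₁ * N₁p * N₁ + S₁ * C₁p * E₁ * N₁p * N₁) = E₁ := by
    rw [h8']; abel
  simp only [Matrix.mul_sub, Matrix.sub_mul, Matrix.mul_add, Matrix.add_mul]
  rw [T1, T2, T3, T4, T5]
  conv_rhs => rw [← key]
  simp only [Matrix.mul_assoc]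
  abel
end

section
/- Let D be a p×n complex matrix and B a q×n complex matrix, and set N = D (I - B⁺ B). Then the rank of the vertical block matrix [I - N N⁺; I - D D⁺] equals the rank of I - N N⁺. Consequently, there exists a matrix T with I - D D⁺ = T (I - N N⁺). -/
open Matrix

theorem rank_RN_RD {p q n : ℕ}
    (D : Matrix (Fin p) (Fin n) ℂ) (B : Matrix (Fin q) (Fin n) ℂ)
    (Dp : Matrix (Fin n) (Fin p) ℂ) (Bp : Matrix (Fin n) (Fin q) ℂ)
    (hD : IsMoorePenrose D Dp) (hB : IsMoorePenrose B Bp)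
    (N : Matrix (Fin p) (Fin n) ℂ) (hN₀ : N = D * (1 - Bp * B))
    (Np : Matrix (Fin n) (Fin p) ℂ) (hN : IsMoorePenrose N Np) :
    (Matrix.fromRows (1 - N * Np) (1 - D * Dp)).rank = (1 - N * Np).rank ∧
    ∃ T : Matrix (Fin p) (Fin p) ℂ, 1 - D * Dp = T * (1 - N * Np) := by
  have hRD_N : (1 - D * Dp) * N = 0 := by
    have hDDD : D * Dp * D = D := hD.1
    rw [hN₀, ← Matrix.mul_assoc, Matrix.sub_mul, Matrix.one_mul, hDDD, sub_self, Matrix.zero_mul]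
  have key : 1 - D * Dp = (1 - D * Dp) * (1 - N * Np) := by
    rw [mul_sub, mul_one, ← Matrix.mul_assoc, hRD_N, Matrix.zero_mul, sub_zero]
  refine ⟨?_, ⟨1 - D * Dp, key⟩⟩
  apply le_antisymm
  · have : Matrix.fromRows (1 - N * Np) (1 - D * Dp)
        = Matrix.fromRows 1 (1 - D * Dp) * (1 - N * Np) := by
      rw [Matrix.fromRows_mul, Matrix.one_mul, ← key]
    rw [this]
    exact Matrix.rank_mul_le_right (Matrix.fromRows 1 (1 - D * Dp)) (1 - N * Np)
  · have h1 : (1 - N * Np) = Matrix.fromCols (1 : Matrix (Fin p) (Fin p) ℂ) (0 : Matrix (Fin p) (Fin p) ℂ) *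
        Matrix.fromRows (1 - N * Np) (1 - D * Dp) := by
      rw [Matrix.fromCols_mul_fromRows, Matrix.one_mul, Matrix.zero_mul, add_zero]
    conv_lhs => rw [h1]
    exact Matrix.rank_mul_le_right (Matrix.fromCols (1 : Matrix (Fin p) (Fin p) ℂ) (0 : Matrix (Fin p) (Fin p) ℂ)) (Matrix.fromRows (1 - N * Np) (1 - D * Dp))
end

section
/- For k ≥ 1, consider the chained system of complex matrix equations AᵢXᵢBᵢ + CᵢXᵢ₊₁Dᵢ = Eᵢ for i = 1,…,k, with unknowns X₁,…,X_{k+1}. If the system is consistent, then for each i the rank equalities rank[Aᵢ Eᵢ Cᵢ] = rank[Aᵢ Cᵢ] and rank[Bᵢ; Eᵢ; Dᵢ] = rank[Bᵢ; Dᵢ] hold. -/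
/-!
Each equation writes `Eᵢ = Aᵢ (Xᵢ Bᵢ) + Cᵢ (Xᵢ₊₁ Dᵢ)`, so the columns of `Eᵢ` lie in the column
space of `[Aᵢ Cᵢ]`; likewise `Eᵢ = (Aᵢ Xᵢ) Bᵢ + (Cᵢ Xᵢ₊₁) Dᵢ` puts its rows in the row space of
`[Bᵢ; Dᵢ]`. Adjoining such a block is a right (resp. left) multiplication by a block matrix,
which cannot raise the rank, while deleting it cannot raise the rank either.
-/

open Matrix

namespace Matrix

variable {R : Type*} [CommRing R] [StrongRankCondition R]
  {m n p p' q q' : Type*} [Fintype n] [Fintype p] [Fintype p'] [Fintype q] [Fintype q']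

theorem rank_fromCols_fromCols_of_eq_mul_add_mul [DecidableEq p] [DecidableEq p']
    (A : Matrix m p R) (C : Matrix m p' R) (E : Matrix m n R) (Y : Matrix p n R)
    (Z : Matrix p' n R) (hE : A * Y + C * Z = E) :
    (fromCols A (fromCols E C)).rank = (fromCols A C).rank := by
  refine le_antisymm ?_ ?_
  · have hfactor : fromCols A (fromCols E C) =
        fromCols A C * fromBlocks 1 (fromCols Y 0) 0 (fromCols Z 1) := by
      rw [fromCols_mul_fromBlocks, ← hE]
      ext i (j | j | j) <;> simp
    rw [hfactor]
    exact rank_mul_le_left _ _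
  · have hsub : fromCols A C = (fromCols A (fromCols E C)).submatrix id (Sum.map id Sum.inr) := by
      ext i (j | j) <;> rfl
    rw [hsub]
    exact rank_submatrix_le _ _ _

theorem rank_fromRows_fromRows_of_eq_mul_add_mul [DecidableEq q] [DecidableEq q']
    (B : Matrix q n R) (D : Matrix q' n R) (E : Matrix m n R) (Y : Matrix m q R)
    (Z : Matrix m q' R) (hE : Y * B + Z * D = E) :
    (fromRows B (fromRows E D)).rank = (fromRows B D).rank := by
  refine le_antisymm ?_ ?_
  · have hfactor : fromRows B (fromRows E D) =
        fromBlocks 1 0 (fromRows Y 0) (fromRows Z 1) * fromRows B D := by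
      rw [fromBlocks_mul_fromRows, ← hE]
      ext (i | i | i) j <;> simp
    rw [hfactor]
    exact rank_mul_le_right _ _
  · have hsub : fromRows B D = (fromRows B (fromRows E D)).submatrix (Sum.map id Sum.inr) id := by
      ext (i | i) j <;> rfl
    rw [hsub]
    exact rank_submatrix_le _ _ _

end Matrix

theorem chained_sylvester_necessary_ranks_one_general
    (k : ℕ)
    (m n : Fin k → ℕ) (p q : Fin (k + 1) → ℕ)
    (A : ∀ i : Fin k, Matrix (Fin (m i)) (Fin (p i.castSucc)) ℂ)
    (B : ∀ i : Fin k, Matrix (Fin (q i.castSucc)) (Fin (n i)) ℂ)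
    (C : ∀ i : Fin k, Matrix (Fin (m i)) (Fin (p i.succ)) ℂ)
    (D : ∀ i : Fin k, Matrix (Fin (q i.succ)) (Fin (n i)) ℂ)
    (E : ∀ i : Fin k, Matrix (Fin (m i)) (Fin (n i)) ℂ)
    (X : ∀ j : Fin (k + 1), Matrix (Fin (p j)) (Fin (q j)) ℂ)
    (hX : ∀ i : Fin k, A i * X i.castSucc * B i + C i * X i.succ * D i = E i) :
    ∀ i : Fin k,
      (Matrix.fromCols (A i) (Matrix.fromCols (E i) (C i))).rank =
        (Matrix.fromCols (A i) (C i)).rank ∧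
      (Matrix.fromRows (B i) (Matrix.fromRows (E i) (D i))).rank =
        (Matrix.fromRows (B i) (D i)).rank := fun i =>
  ⟨rank_fromCols_fromCols_of_eq_mul_add_mul _ _ _ _ _
      (by simpa only [Matrix.mul_assoc] using hX i),
    rank_fromRows_fromRows_of_eq_mul_add_mul _ _ _ _ _ (hX i)⟩

theorem chained_sylvester_necessary_ranks_one
    (k : ℕ) (hk : 1 ≤ k)
    (m n : Fin k → ℕ) (p q : Fin (k + 1) → ℕ)
    (A : ∀ i : Fin k, Matrix (Fin (m i)) (Fin (p i.castSucc)) ℂ)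
    (B : ∀ i : Fin k, Matrix (Fin (q i.castSucc)) (Fin (n i)) ℂ)
    (C : ∀ i : Fin k, Matrix (Fin (m i)) (Fin (p i.succ)) ℂ)
    (D : ∀ i : Fin k, Matrix (Fin (q i.succ)) (Fin (n i)) ℂ)
    (E : ∀ i : Fin k, Matrix (Fin (m i)) (Fin (n i)) ℂ)
    (X : ∀ j : Fin (k + 1), Matrix (Fin (p j)) (Fin (q j)) ℂ)
    (hX : ∀ i : Fin k, A i * X i.castSucc * B i + C i * X i.succ * D i = E i) :
    ∀ i : Fin k,
      (Matrix.fromCols (A i) (Matrix.fromCols (E i) (C i))).rank =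
        (Matrix.fromCols (A i) (C i)).rank ∧
      (Matrix.fromRows (B i) (Matrix.fromRows (E i) (D i))).rank =
        (Matrix.fromRows (B i) (D i)).rank :=
  chained_sylvester_necessary_ranks_one_general k m n p q A B C D E X hX
end

section
/- For k ≥ 1, consider the chained system AᵢXᵢBᵢ + CᵢXᵢ₊₁Dᵢ = Eᵢ for i = 1,…,k over ℂ. If the system is consistent, then for each i the rank equalities rank[[Aᵢ, Eᵢ],[0, Dᵢ]] = rank(Aᵢ) + rank(Dᵢ) and rank[[Bᵢ, 0],[Eᵢ, Cᵢ]] = rank(Bᵢ) + rank(Cᵢ) hold. -/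
open Matrix

/-! A solution of `A X B + C Y D = E` writes `E = A Y' + Z D` and `E = W B + C V`, and then Roth's
block factorisation
`[[A, E], [0, D]] = [[1, Z], [0, 1]] * [[A, 0], [0, D]] * [[1, Y'], [0, 1]]`
exhibits the block matrix as equivalent to the block diagonal one, whose rank is additive. -/

namespace Submodule

variable {R M N : Type*} [Semiring R] [AddCommMonoid M] [Module R M] [AddCommMonoid N] [Module R N]

def prodEquivProd (p : Submodule R M) (q : Submodule R N) : p.prod q ≃ₗ[R] p × q where
  toFun x := (⟨x.1.1, x.2.1⟩, ⟨x.1.2, x.2.2⟩)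
  invFun x := ⟨(x.1, x.2), x.1.2, x.2.2⟩
  map_add' _ _ := rfl
  map_smul' _ _ := rfl
  left_inv _ := rfl
  right_inv _ := rfl

theorem finrank_prod {K V W : Type*} [DivisionRing K] [AddCommGroup V] [Module K V]
    [AddCommGroup W] [Module K W] [FiniteDimensional K V] [FiniteDimensional K W]
    (p : Submodule K V) (q : Submodule K W) :
    Module.finrank K (p.prod q) = Module.finrank K p + Module.finrank K q := by
  rw [(prodEquivProd p q).finrank_eq, Module.finrank_prod]

end Submodule

namespace Matrix

variable {K l m n o : Type*} [Field K] [Fintype l] [Fintype m] [Fintype n] [Fintype o]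

theorem rank_fromBlocks_zero_zero (A : Matrix m l K) (D : Matrix o n K) :
    (fromBlocks A 0 0 D).rank = A.rank + D.rank := by
  let eDom := LinearEquiv.sumArrowLequivProdArrow l n K K
  let eCod := LinearEquiv.sumArrowLequivProdArrow m o K K
  have hconj : eCod.toLinearMap ∘ₗ (fromBlocks A 0 0 D).mulVecLin =
      (A.mulVecLin.prodMap D.mulVecLin) ∘ₗ eDom.toLinearMap := by
    ext v : 1
    simp [eDom, eCod, LinearEquiv.sumArrowLequivProdArrow, Equiv.sumArrowEquivProdArrow,
      fromBlocks_mulVec]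
  have hrange : (LinearMap.range (fromBlocks A 0 0 D).mulVecLin).map eCod.toLinearMap =
      (LinearMap.range A.mulVecLin).prod (LinearMap.range D.mulVecLin) := by
    rw [← LinearMap.range_comp, hconj, LinearMap.range_comp_of_range_eq_top _ eDom.range,
      LinearMap.range_prodMap]
  rw [rank, rank, rank, ← LinearEquiv.finrank_map_eq eCod, hrange, Submodule.finrank_prod]

theorem rank_fromBlocks_zero₂₁_of_eq_add (A : Matrix m l K) (D : Matrix o n K) (E : Matrix m n K)
    (Y : Matrix l n K) (Z : Matrix m o K) (hE : E = A * Y + Z * D) :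
    (fromBlocks A E 0 D).rank = A.rank + D.rank := by
  classical
  have hfactor : fromBlocks A E 0 D =
      (fromBlocks 1 Z 0 1 : Matrix (m ⊕ o) (m ⊕ o) K) * fromBlocks A 0 0 D *
        (fromBlocks 1 Y 0 1 : Matrix (l ⊕ n) (l ⊕ n) K) := by
    simp [fromBlocks_multiply, hE]
  rw [hfactor, rank_mul_eq_left_of_isUnit_det _ _ (by simp),
    rank_mul_eq_right_of_isUnit_det _ _ (by simp), rank_fromBlocks_zero_zero]

theorem rank_fromBlocks_zero₁₂_of_eq_add (B : Matrix l n K) (C : Matrix m o K) (E : Matrix m n K)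
    (W : Matrix m l K) (V : Matrix o n K) (hE : E = W * B + C * V) :
    (fromBlocks B 0 E C).rank = B.rank + C.rank := by
  rw [← rank_transpose, fromBlocks_transpose, transpose_zero,
    rank_fromBlocks_zero₂₁_of_eq_add Bᵀ Cᵀ Eᵀ Wᵀ Vᵀ (by simp [hE, transpose_mul]),
    rank_transpose, rank_transpose]

end Matrix

theorem chained_sylvester_necessary_ranks_two_general
    (k : ℕ)
    (m n : Fin k → ℕ) (p q : Fin (k + 1) → ℕ)
    (A : ∀ i : Fin k, Matrix (Fin (m i)) (Fin (p i.castSucc)) ℂ)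
    (B : ∀ i : Fin k, Matrix (Fin (q i.castSucc)) (Fin (n i)) ℂ)
    (C : ∀ i : Fin k, Matrix (Fin (m i)) (Fin (p i.succ)) ℂ)
    (D : ∀ i : Fin k, Matrix (Fin (q i.succ)) (Fin (n i)) ℂ)
    (E : ∀ i : Fin k, Matrix (Fin (m i)) (Fin (n i)) ℂ)
    (X : ∀ j : Fin (k + 1), Matrix (Fin (p j)) (Fin (q j)) ℂ)
    (hX : ∀ i : Fin k, A i * X i.castSucc * B i + C i * X i.succ * D i = E i) :
    ∀ i : Fin k,
      (Matrix.fromBlocks (A i) (E i) 0 (D i)).rank = (A i).rank + (D i).rank ∧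
      (Matrix.fromBlocks (B i) 0 (E i) (C i)).rank = (B i).rank + (C i).rank := by
  intro i
  exact ⟨rank_fromBlocks_zero₂₁_of_eq_add _ _ _ (X i.castSucc * B i) (C i * X i.succ)
      (by simp only [← hX i, Matrix.mul_assoc]),
    rank_fromBlocks_zero₁₂_of_eq_add _ _ _ (A i * X i.castSucc) (X i.succ * D i)
      (by simp only [← hX i, Matrix.mul_assoc])⟩

theorem chained_sylvester_necessary_ranks_two
    (k : ℕ) (hk : 1 ≤ k)
    (m n : Fin k → ℕ) (p q : Fin (k + 1) → ℕ)
    (A : ∀ i : Fin k, Matrix (Fin (m i)) (Fin (p i.castSucc)) ℂ)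
    (B : ∀ i : Fin k, Matrix (Fin (q i.castSucc)) (Fin (n i)) ℂ)
    (C : ∀ i : Fin k, Matrix (Fin (m i)) (Fin (p i.succ)) ℂ)
    (D : ∀ i : Fin k, Matrix (Fin (q i.succ)) (Fin (n i)) ℂ)
    (E : ∀ i : Fin k, Matrix (Fin (m i)) (Fin (n i)) ℂ)
    (X : ∀ j : Fin (k + 1), Matrix (Fin (p j)) (Fin (q j)) ℂ)
    (hX : ∀ i : Fin k, A i * X i.castSucc * B i + C i * X i.succ * D i = E i) :
    ∀ i : Fin k,
      (Matrix.fromBlocks (A i) (E i) 0 (D i)).rank = (A i).rank + (D i).rank ∧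
      (Matrix.fromBlocks (B i) 0 (E i) (C i)).rank = (B i).rank + (C i).rank :=
  chained_sylvester_necessary_ranks_two_general k m n p q A B C D E X hX
end

section
/- Consider the system of two coupled equations A₁X₁B₁ + C₁X₂D₁ = E₁ and A₂X₂B₂ + C₂X₃D₂ = E₂ over ℂ. If the system has a solution (X₁, X₂, X₃), then rank of the block matrix [[A₁, E₁, C₁, 0, 0],[0, D₁, 0, B₂, 0],[0, 0, A₂, -E₂, C₂]] equals rank[[A₁, C₁, 0],[0, A₂, C₂]] + rank[D₁ B₂]. -/
/-!
Permuting rows and columns turns the left-hand matrix into `fromBlocks P E 0 Q`, where `P` and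
`Q = [D₁ B₂]` are the two matrices on the right and `E = diag(E₁, -E₂)`. A solution of the system
writes `E = P * Y + Z * Q`, so block row and column eliminations by unitriangular matrices
clear `E`, and the rank of the block diagonal matrix `fromBlocks P 0 0 Q` is `rank P + rank Q`.
-/

open Matrix

def Submodule.prodEquiv {R M N : Type*} [Semiring R] [AddCommMonoid M] [AddCommMonoid N]
    [Module R M] [Module R N] (p : Submodule R M) (q : Submodule R N) :
    p.prod q ≃ₗ[R] p × q where
  toFun x := (⟨x.1.1, x.2.1⟩, ⟨x.1.2, x.2.2⟩)
  invFun x := ⟨(x.1, x.2), x.1.2, x.2.2⟩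
  map_add' _ _ := rfl
  map_smul' _ _ := rfl

theorem LinearMap.finrank_range_prodMap {K V₁ V₂ W₁ W₂ : Type*} [DivisionRing K]
    [AddCommGroup V₁] [Module K V₁] [AddCommGroup V₂] [Module K V₂]
    [AddCommGroup W₁] [Module K W₁] [AddCommGroup W₂] [Module K W₂]
    [FiniteDimensional K W₁] [FiniteDimensional K W₂]
    (f : V₁ →ₗ[K] W₁) (g : V₂ →ₗ[K] W₂) :
    Module.finrank K (f.prodMap g).range =
      Module.finrank K f.range + Module.finrank K g.range := by
  rw [LinearMap.range_prodMap, (Submodule.prodEquiv _ _).finrank_eq, Module.finrank_prod]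

theorem Matrix.mulVecLin_fromBlocks_zero_zero {R l m n o : Type*} [CommSemiring R]
    [Fintype l] [Fintype m] (A : Matrix n l R) (D : Matrix o m R) :
    (fromBlocks A 0 0 D).mulVecLin =
      (LinearEquiv.sumArrowLequivProdArrow n o R R).symm.toLinearMap ∘ₗ
        A.mulVecLin.prodMap D.mulVecLin ∘ₗ
          (LinearEquiv.sumArrowLequivProdArrow l m R R).toLinearMap := by
  ext x (i | i) <;> simp [fromBlocks_mulVec] <;> rfl

theorem Matrix.rank_fromBlocks_zero_zero_s12 {K l m n o : Type*} [Field K]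
    [Fintype l] [Fintype m] [Fintype n] [Fintype o] (A : Matrix n l K) (D : Matrix o m K) :
    (fromBlocks A 0 0 D).rank = A.rank + D.rank := by
  rw [rank, mulVecLin_fromBlocks_zero_zero, LinearMap.range_comp, LinearMap.range_comp,
    LinearEquiv.range, Submodule.map_top, LinearEquiv.finrank_map_eq,
    LinearMap.finrank_range_prodMap, rank, rank]

theorem Matrix.rank_fromBlocks_of_eq_mul_add_mul {K l m n o : Type*} [Field K]
    [Fintype l] [Fintype m] [Fintype n] [Fintype o] [DecidableEq l] [DecidableEq m]
    [DecidableEq n] [DecidableEq o]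
    {P : Matrix n l K} {E : Matrix n m K} {Q : Matrix o m K}
    (Y : Matrix l m K) (Z : Matrix n o K) (hE : E = P * Y + Z * Q) :
    (fromBlocks P E 0 Q).rank = P.rank + Q.rank := by
  have hfactor : fromBlocks P E 0 Q =
      fromBlocks (1 : Matrix n n K) Z 0 1 * fromBlocks P 0 0 Q *
        fromBlocks (1 : Matrix l l K) Y 0 (1 : Matrix m m K) := by
    simp [fromBlocks_multiply, hE]
  rw [hfactor, rank_mul_eq_left_of_isUnit_det _ _ (by simp),
    rank_mul_eq_right_of_isUnit_det _ _ (by simp),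
    rank_fromBlocks_zero_zero_s12]

def Equiv.sumMiddleToEnd (α β γ : Type*) : α ⊕ (β ⊕ γ) ≃ (α ⊕ γ) ⊕ β where
  toFun
    | .inl a => .inl (.inl a)
    | .inr (.inl b) => .inr b
    | .inr (.inr c) => .inl (.inr c)
  invFun
    | .inl (.inl a) => .inl a
    | .inl (.inr c) => .inr (.inr c)
    | .inr b => .inr (.inl b)
  left_inv := by rintro (a | b | c) <;> rfl
  right_inv := by rintro ((a | c) | b) <;> rfl

def Equiv.sumDeinterleave (α₁ β₁ α₂ β₂ α₃ : Type*) :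
    α₁ ⊕ (β₁ ⊕ (α₂ ⊕ (β₂ ⊕ α₃))) ≃ (α₁ ⊕ (α₂ ⊕ α₃)) ⊕ (β₁ ⊕ β₂) where
  toFun
    | .inl a => .inl (.inl a)
    | .inr (.inl b) => .inr (.inl b)
    | .inr (.inr (.inl a)) => .inl (.inr (.inl a))
    | .inr (.inr (.inr (.inl b))) => .inr (.inr b)
    | .inr (.inr (.inr (.inr a))) => .inl (.inr (.inr a))
  invFun
    | .inl (.inl a) => .inl a
    | .inl (.inr (.inl a)) => .inr (.inr (.inl a))
    | .inl (.inr (.inr a)) => .inr (.inr (.inr (.inr a)))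
    | .inr (.inl b) => .inr (.inl b)
    | .inr (.inr b) => .inr (.inr (.inr (.inl b)))
  left_inv := by rintro (a | b | a | b | a) <;> rfl
  right_inv := by rintro ((a | a | a) | (b | b)) <;> rfl

theorem Matrix.chainBlockMatrix_eq_submatrix_fromBlocks
    {R m₁ q₂ m₂ p₁ n₁ p₂ n₂ p₃ : Type*} [Zero R]
    (A₁ : Matrix m₁ p₁ R) (E₁ : Matrix m₁ n₁ R) (C₁ : Matrix m₁ p₂ R)
    (D₁ : Matrix q₂ n₁ R) (B₂ : Matrix q₂ n₂ R)
    (A₂ : Matrix m₂ p₂ R) (E₂ : Matrix m₂ n₂ R) (C₂ : Matrix m₂ p₃ R) :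
    fromRows (fromCols A₁ (fromCols E₁ (fromCols C₁ (fromCols 0 0))))
      (fromRows (fromCols 0 (fromCols D₁ (fromCols 0 (fromCols B₂ 0))))
        (fromCols 0 (fromCols 0 (fromCols A₂ (fromCols E₂ C₂))))) =
    (fromBlocks (fromRows (fromCols A₁ (fromCols C₁ 0)) (fromCols 0 (fromCols A₂ C₂)))
      (fromBlocks E₁ 0 0 E₂) 0 (fromCols D₁ B₂)).submatrix
      (Equiv.sumMiddleToEnd m₁ q₂ m₂) (Equiv.sumDeinterleave p₁ n₁ p₂ n₂ p₃) := by
  ext (i | i | i) (j | j | j | j | j) <;> rfl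

theorem two_step_chain_rank_eq_34
    {m₁ p₁ q₁ n₁ m₂ p₂ q₂ n₂ p₃ q₃ : ℕ}
    (A₁ : Matrix (Fin m₁) (Fin p₁) ℂ) (B₁ : Matrix (Fin q₁) (Fin n₁) ℂ)
    (C₁ : Matrix (Fin m₁) (Fin p₂) ℂ) (D₁ : Matrix (Fin q₂) (Fin n₁) ℂ)
    (E₁ : Matrix (Fin m₁) (Fin n₁) ℂ)
    (A₂ : Matrix (Fin m₂) (Fin p₂) ℂ) (B₂ : Matrix (Fin q₂) (Fin n₂) ℂ)
    (C₂ : Matrix (Fin m₂) (Fin p₃) ℂ) (D₂ : Matrix (Fin q₃) (Fin n₂) ℂ)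
    (E₂ : Matrix (Fin m₂) (Fin n₂) ℂ)
    (X₁ : Matrix (Fin p₁) (Fin q₁) ℂ) (X₂ : Matrix (Fin p₂) (Fin q₂) ℂ)
    (X₃ : Matrix (Fin p₃) (Fin q₃) ℂ)
    (h₁ : A₁ * X₁ * B₁ + C₁ * X₂ * D₁ = E₁)
    (h₂ : A₂ * X₂ * B₂ + C₂ * X₃ * D₂ = E₂) :
    (Matrix.fromRows
      (Matrix.fromCols A₁ (Matrix.fromCols E₁ (Matrix.fromCols C₁
        (Matrix.fromCols (0 : Matrix (Fin m₁) (Fin n₂) ℂ)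
          (0 : Matrix (Fin m₁) (Fin p₃) ℂ)))))
      (Matrix.fromRows
        (Matrix.fromCols (0 : Matrix (Fin q₂) (Fin p₁) ℂ)
          (Matrix.fromCols D₁ (Matrix.fromCols (0 : Matrix (Fin q₂) (Fin p₂) ℂ)
            (Matrix.fromCols B₂ (0 : Matrix (Fin q₂) (Fin p₃) ℂ)))))
        (Matrix.fromCols (0 : Matrix (Fin m₂) (Fin p₁) ℂ)
          (Matrix.fromCols (0 : Matrix (Fin m₂) (Fin n₁) ℂ)
            (Matrix.fromCols A₂ (Matrix.fromCols (-E₂) C₂)))))).rank =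
    (Matrix.fromRows
      (Matrix.fromCols A₁ (Matrix.fromCols C₁ (0 : Matrix (Fin m₁) (Fin p₃) ℂ)))
      (Matrix.fromCols (0 : Matrix (Fin m₂) (Fin p₁) ℂ)
        (Matrix.fromCols A₂ C₂))).rank +
    (Matrix.fromCols D₁ B₂).rank := by
  rw [chainBlockMatrix_eq_submatrix_fromBlocks, rank_submatrix]
  -- `Y` yields `E₁` in the top block; `Z` cancels the `A₂ X₂ D₁` that `Y` leaves below it.
  refine rank_fromBlocks_of_eq_mul_add_mul
    (fromBlocks (X₁ * B₁) 0 (fromRows (X₂ * D₁) 0) (fromRows 0 (-(X₃ * D₂))))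
    (fromRows 0 (-(A₂ * X₂))) ?_
  subst h₁ h₂
  simp [fromBlocks_multiply, fromCols_mul_fromRows, fromRows_mul, fromBlocks_add,
    Matrix.mul_assoc, add_comm]
end
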